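/- arXiv:1801.02996 — 7 statements merged into one kernel-verified Lean document; each statement's English description precedes it below -/
import Mathlib

section
/- Let S be a finite set of integers containing -1 with all other elements non-negative, with at least one positive element or containing 0 together with some element ≥ 1 (i.e., S ≠ {-1,0}). Define S'(u) = ∑_{s∈S} s·u^{s-1} (derivative of the characteristic Laurent polynomial S(u) = ∑_{s∈S} u^s) for u > 0. Then there exists a unique τ > 0 with S'(τ) = 0, and τ ≤ 1, with equality τ = 1 if and only if S = {-1,0,1} or S = {-1,1}. -/
/-!
Multiplying by `u²` turns `S'(u) = ∑ s u^(s-1)` into the polynomial `N(u) = ∑ s u^(s+1)`, whose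
`s = -1` term is the constant `-1` and whose other terms are non-decreasing on `[0, ∞)`, strictly
for `s > 0`. Hence `N` is strictly increasing there, with `N 0 = -1` and `N 1 = ∑_{s ∈ S} s ≥ 0`,
so it has exactly one positive zero `τ`, which lies in `(0, 1]`; and `τ = 1` exactly when
`∑_{s ∈ S} s = 0`, i.e. when the non-negative elements of `S` sum to `1`.
-/

open Finset

namespace Lukasiewicz

/-- `u² S'(u)`; the exponent `(s + 1).toNat` is the true exponent `s + 1` as long as `-1 ≤ s`. -/
noncomputable def derivNumerator (S : Finset ℤ) (u : ℝ) : ℝ :=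
  ∑ s ∈ S, (s : ℝ) * u ^ (s + 1).toNat

lemma sq_mul_zpow_sub_one {u : ℝ} (hu : u ≠ 0) {s : ℤ} (hs : -1 ≤ s) :
    u ^ 2 * u ^ (s - 1) = u ^ (s + 1).toNat := by
  rw [← zpow_natCast u (s + 1).toNat, Int.toNat_of_nonneg (by omega),
    show s + 1 = ((2 : ℕ) : ℤ) + (s - 1) by push_cast; ring, zpow_add₀ hu, zpow_natCast]

lemma sq_mul_sum_zpow_eq_derivNumerator {S : Finset ℤ} (hS : ∀ s ∈ S, -1 ≤ s) {u : ℝ}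
    (hu : u ≠ 0) : u ^ 2 * ∑ s ∈ S, (s : ℝ) * u ^ (s - 1) = derivNumerator S u := by
  rw [derivNumerator, mul_sum]
  refine sum_congr rfl fun s hs => ?_
  rw [mul_left_comm, sq_mul_zpow_sub_one hu (hS s hs)]

lemma continuous_derivNumerator (S : Finset ℤ) : Continuous (derivNumerator S) := by
  unfold derivNumerator
  fun_prop

lemma derivNumerator_zero {S : Finset ℤ} (hneg : -1 ∈ S) (hS : ∀ s ∈ S, -1 ≤ s) :
    derivNumerator S 0 = -1 := by
  rw [derivNumerator, sum_eq_single_of_mem (-1) hneg]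
  · norm_num
  · intro s hs hs_ne
    rw [zero_pow (by have := hS s hs; omega), mul_zero]

lemma derivNumerator_one (S : Finset ℤ) : derivNumerator S 1 = ((∑ s ∈ S, s : ℤ) : ℝ) := by
  simp [derivNumerator]

lemma strictMonoOn_derivNumerator {S : Finset ℤ} (hpos : ∃ s ∈ S, 0 < s) :
    StrictMonoOn (derivNumerator S) (Set.Ici 0) := by
  intro a ha b hb hab
  obtain ⟨s₀, hs₀, hs₀_pos⟩ := hpos
  refine sum_lt_sum (fun s _ => ?_) ⟨s₀, hs₀, ?_⟩
  · rcases lt_or_ge s 0 with hs | hs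
    · rw [show (s + 1).toNat = 0 by omega, pow_zero, pow_zero]
    · exact mul_le_mul_of_nonneg_left (pow_le_pow_left₀ ha hab.le _) (by exact_mod_cast hs)
  · exact mul_lt_mul_of_pos_left (pow_lt_pow_left₀ hab ha (by omega)) (by exact_mod_cast hs₀_pos)

lemma exists_mem_Ioc_eq_zero {f : ℝ → ℝ} (hf : ContinuousOn f (Set.Icc 0 1)) (h0 : f 0 < 0)
    (h1 : 0 ≤ f 1) : ∃ t ∈ Set.Ioc 0 1, f t = 0 := by
  obtain ⟨t, ht, hft⟩ := intermediate_value_Icc zero_le_one hf ⟨h0.le, h1⟩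
  refine ⟨t, ⟨lt_of_le_of_ne ht.1 ?_, ht.2⟩, hft⟩
  rintro rfl
  exact h0.ne hft

lemma eq_one_or_eq_zero_one_of_sum_eq_one {T : Finset ℤ} (hT : ∀ t ∈ T, 0 ≤ t)
    (hsum : ∑ t ∈ T, t = 1) : T = {1} ∨ T = {0, 1} := by
  have hle : ∀ t ∈ T, t ≤ 1 := fun t ht => hsum ▸ single_le_sum hT ht
  have hone : 1 ∈ T := by
    by_contra h
    have : ∑ t ∈ T, t = 0 := sum_eq_zero fun t ht => by
      have := hle t ht; have := hT t ht; have := ne_of_mem_of_not_mem ht h; omega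
    omega
  have hrest : T.erase 1 ⊆ {0} := fun t ht => by
    have := hle t (mem_of_mem_erase ht); have := hT t (mem_of_mem_erase ht)
    have := ne_of_mem_erase ht; rw [mem_singleton]; omega
  rw [← insert_erase hone, pair_comm]
  rcases subset_singleton_iff.mp hrest with h | h <;> rw [h] <;> simp

lemma sum_nonneg_of_one_le_mem {S : Finset ℤ} (hneg : -1 ∈ S) (hnn : ∀ s ∈ S, s ≠ -1 → 0 ≤ s)
    (hpos : ∃ s ∈ S, 1 ≤ s) : 0 ≤ ∑ s ∈ S, s := by
  obtain ⟨s₀, hs₀, hs₀_pos⟩ := hpos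
  have hT : ∀ t ∈ S.erase (-1), 0 ≤ t := fun t ht =>
    hnn t (mem_of_mem_erase ht) (ne_of_mem_erase ht)
  have := single_le_sum hT (mem_erase.mpr ⟨by omega, hs₀⟩)
  have := add_sum_erase S (fun s => s) hneg
  omega

lemma sum_eq_zero_iff_eq_pair_or_triple {S : Finset ℤ} (hneg : -1 ∈ S)
    (hnn : ∀ s ∈ S, s ≠ -1 → 0 ≤ s) :
    ∑ s ∈ S, s = 0 ↔ S = {-1, 0, 1} ∨ S = {-1, 1} := by
  constructor
  · intro hsum
    have hT : ∀ t ∈ S.erase (-1), 0 ≤ t := fun t ht =>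
    hnn t (mem_of_mem_erase ht) (ne_of_mem_erase ht)
    have hTsum : ∑ t ∈ S.erase (-1), t = 1 := by have := add_sum_erase S (fun s => s) hneg; omega
    rw [← insert_erase hneg]
    rcases eq_one_or_eq_zero_one_of_sum_eq_one hT hTsum with h | h <;> rw [h] <;> simp
  · rintro (rfl | rfl) <;> decide

end Lukasiewicz

open Lukasiewicz in
/-- For a Łukasiewicz step set `S` (a finite set of integers containing
`-1`, all other elements non-negative, and containing some element `≥ 1`, i.e.
`S ≠ {-1, 0}`), the derivative `S'(u) = ∑_{s ∈ S} s·u^(s-1)` of the characteristic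
Laurent polynomial has a unique positive root `τ`, and any such root satisfies `τ ≤ 1`,
with `τ = 1` iff `S = {-1, 0, 1}` or `S = {-1, 1}`. -/
theorem lukasiewicz_structural_constant
    (S : Finset ℤ) (hneg : (-1 : ℤ) ∈ S)
    (hnn : ∀ s ∈ S, s ≠ -1 → 0 ≤ s)
    (hpos : ∃ s ∈ S, 1 ≤ s) :
    (∃! τ : ℝ, 0 < τ ∧ ∑ s ∈ S, (s : ℝ) * τ ^ (s - 1) = 0) ∧
    (∀ τ : ℝ, 0 < τ → ∑ s ∈ S, (s : ℝ) * τ ^ (s - 1) = 0 →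
      τ ≤ 1 ∧ (τ = 1 ↔ S = {-1, 0, 1} ∨ S = {-1, 1})) := by
  have hS : ∀ s ∈ S, -1 ≤ s := fun s hs => by
    rcases eq_or_ne s (-1) with h | h
    · exact h.ge
    · linarith [hnn s hs h]
  have hroot : ∀ τ : ℝ, 0 < τ → (∑ s ∈ S, (s : ℝ) * τ ^ (s - 1) = 0 ↔ derivNumerator S τ = 0) :=
    fun τ hτ => by
      rw [← sq_mul_sum_zpow_eq_derivNumerator hS hτ.ne', mul_eq_zero,
        or_iff_right (pow_ne_zero 2 hτ.ne')]
  have hmono : StrictMonoOn (derivNumerator S) (Set.Ici 0) := by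
    obtain ⟨s, hs, hs_pos⟩ := hpos
    exact strictMonoOn_derivNumerator ⟨s, hs, by omega⟩
  obtain ⟨τ₀, hτ₀, hNτ₀⟩ := exists_mem_Ioc_eq_zero (continuous_derivNumerator S).continuousOn
    (by rw [derivNumerator_zero hneg hS]; norm_num)
    (by rw [derivNumerator_one]; exact_mod_cast sum_nonneg_of_one_le_mem hneg hnn hpos)
  have huniq : ∀ τ : ℝ, 0 < τ → derivNumerator S τ = 0 → τ = τ₀ := fun τ hτ hNτ =>
    hmono.injOn hτ.le hτ₀.1.le (hNτ.trans hNτ₀.symm)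
  refine ⟨⟨τ₀, ⟨hτ₀.1, (hroot τ₀ hτ₀.1).2 hNτ₀⟩, fun τ h => huniq τ h.1 ((hroot τ h.1).1 h.2)⟩,
    fun τ hτ h => ?_⟩
  obtain rfl := huniq τ hτ ((hroot τ hτ).1 h)
  refine ⟨hτ₀.2, ?_⟩
  rw [← sum_eq_zero_iff_eq_pair_or_triple hneg hnn, ← Int.cast_eq_zero (α := ℝ),
    ← derivNumerator_one]
  exact ⟨fun h1 => h1 ▸ hNτ₀, fun h1 => (huniq 1 one_pos h1).symm⟩
end

section
/- Let p ≥ 1, let τ be a real number with 0 < τ < 1, let n be an integer with n ≡ k (mod p) where 0 ≤ k ≤ p-1. Then ∑_{ζ ∈ G(p)} ζ^{-n} / (1 - τζ)^2 = p·τ^k·(τ^p·(p - k - 1) + k + 1) / (1 - τ^p)^2, where G(p) is the set of complex p-th roots of unity. -/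
open Polynomial

private lemma zpow_eq_zpow_of_dvd {ζ : ℂ} (hζ : ζ ≠ 0) {p : ℕ} (h1 : ζ ^ p = 1)
    {a b : ℤ} (h : (p : ℤ) ∣ a - b) : ζ ^ a = ζ ^ b := by
  obtain ⟨t, ht⟩ := h
  have ha : a = b + (p : ℤ) * t := by linarith
  rw [ha, zpow_add₀ hζ, zpow_mul, zpow_natCast, h1, one_zpow, mul_one]

private lemma dvd_small {p m : ℕ} (hp : 1 ≤ p) (h : p ∣ m) (h0 : 0 < m) (h3 : m < 3 * p) :
    m = p ∨ m = 2 * p := by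
  obtain ⟨a, rfl⟩ := h
  have ha1 : 1 ≤ a := by
    rcases Nat.eq_zero_or_pos a with h | h
    · simp [h] at h0
    · exact h
  have ha2 : a < 3 := by
    by_contra hcon
    push_neg at hcon
    have : p * 3 ≤ p * a := Nat.mul_le_mul_left p hcon
    omega
  interval_cases a <;> omega

private lemma sum_nthRoots_pow (p : ℕ) (hp : 1 ≤ p) (m : ℕ) :
    ∑ ζ ∈ Polynomial.nthRootsFinset p (1 : ℂ), ζ ^ m = if p ∣ m then (p : ℂ) else 0 := by
  have hp' : p ≠ 0 := by omega
  have : NeZero p := ⟨hp'⟩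
  obtain ⟨ζ0, hζ0⟩ : ∃ ζ0 : ℂ, IsPrimitiveRoot ζ0 p :=
    ⟨Complex.exp (2 * Real.pi * Complex.I / p), Complex.isPrimitiveRoot_exp p hp'⟩
  have himg : Polynomial.nthRootsFinset p (1 : ℂ) = (Finset.range p).image (fun j => ζ0 ^ j) := by
    apply Finset.eq_of_subset_of_card_le
    · intro x hx
      rw [Polynomial.mem_nthRootsFinset (by omega) 1] at hx
      obtain ⟨j, hj, hjx⟩ := hζ0.eq_pow_of_pow_eq_one hx
      exact Finset.mem_image.2 ⟨j, Finset.mem_range.2 hj, hjx⟩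
    · rw [hζ0.card_nthRootsFinset, Finset.card_image_of_injOn]
      · simp
      · intro i hi j hj hij
        exact hζ0.pow_inj (Finset.mem_range.1 hi) (Finset.mem_range.1 hj) hij
  rw [himg, Finset.sum_image (fun i hi j hj hij =>
    hζ0.pow_inj (Finset.mem_range.1 hi) (Finset.mem_range.1 hj) hij)]
  have : ∀ j, (ζ0 ^ j) ^ m = (ζ0 ^ m) ^ j := fun j => by
    rw [← pow_mul, ← pow_mul, mul_comm]
  simp only [this]
  by_cases hdvd : p ∣ m
  · rw [if_pos hdvd]
    have h1 : ζ0 ^ m = 1 := by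
      obtain ⟨t, rfl⟩ := hdvd
      rw [pow_mul, hζ0.pow_eq_one, one_pow]
    simp [h1]
  · rw [if_neg hdvd]
    have h1 : ζ0 ^ m ≠ 1 := fun h => hdvd ((hζ0.pow_eq_one_iff_dvd m).1 h)
    rw [geom_sum_eq h1]
    have : (ζ0 ^ m) ^ p = 1 := by
      rw [← pow_mul, mul_comm, pow_mul, hζ0.pow_eq_one, one_pow]
    rw [this, sub_self, zero_div]

/-- For `p ≥ 1`, a real `τ` with `0 < τ < 1`, and an integer `n` with
`n ≡ k (mod p)` where `0 ≤ k ≤ p - 1`, one has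
`∑_{ζ ∈ G(p)} ζ^{-n} / (1 - τζ)² = p·τ^k·(τ^p·(p - k - 1) + k + 1) / (1 - τ^p)²`,
where `G(p)` is the set of complex `p`-th roots of unity. -/
theorem sum_roots_of_unity_inv_sq (p : ℕ) (hp : 1 ≤ p) (τ : ℝ)
    (hτ0 : 0 < τ) (hτ1 : τ < 1) (n : ℤ) (k : ℕ) (hk : k ≤ p - 1)
    (hnk : n ≡ (k : ℤ) [ZMOD (p : ℤ)]) :
    ∑ ζ ∈ Polynomial.nthRootsFinset p (1 : ℂ), ζ ^ (-n) / (1 - (τ : ℂ) * ζ) ^ 2 =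
      (p : ℂ) * (τ : ℂ) ^ k * ((τ : ℂ) ^ p * ((p : ℂ) - (k : ℂ) - 1) + (k : ℂ) + 1) /
        (1 - (τ : ℂ) ^ p) ^ 2 := by
  have hkp : k < p := by omega
  set c : ℂ := (τ : ℂ) with hc
  -- 1 - τ^p ≠ 0
  have hτp1 : τ ^ p < 1 := pow_lt_one₀ hτ0.le hτ1 (by omega)
  have hden : (1 : ℂ) - c ^ p ≠ 0 := by
    rw [hc, ← Complex.ofReal_pow, sub_ne_zero]
    intro h
    have : (τ : ℝ) ^ p = 1 := by exact_mod_cast h.symm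
    linarith
  -- rewrite each summand
  have hterm : ∀ ζ ∈ Polynomial.nthRootsFinset p (1 : ℂ),
      ζ ^ (-n) / (1 - c * ζ) ^ 2 =
        (∑ i ∈ Finset.range p, ∑ j ∈ Finset.range p, c ^ (i + j) * ζ ^ (p - k + i + j))
          / (1 - c ^ p) ^ 2 := by
    intro ζ hζ
    have hζp : ζ ^ p = 1 := (Polynomial.mem_nthRootsFinset (by omega) 1).1 hζ
    have hζ0 : ζ ≠ 0 := Polynomial.ne_zero_of_mem_nthRootsFinset one_ne_zero hζ
    -- exponent reduction
    have hzp : ζ ^ (-n) = ζ ^ (p - k) := by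
      have hdvd : (p : ℤ) ∣ (-n) - ((p - k : ℕ) : ℤ) := by
        have h1 : (p : ℤ) ∣ (k : ℤ) - n := hnk.dvd
        have h2 : ((p - k : ℕ) : ℤ) = (p : ℤ) - k := by
          push_cast [Nat.cast_sub hkp.le]; ring
        rw [h2]
        have : (-n) - ((p : ℤ) - k) = ((k : ℤ) - n) + (p : ℤ) * (-1) := by ring
        rw [this]
        exact dvd_add h1 ⟨-1, rfl⟩
      calc ζ ^ (-n) = ζ ^ (((p - k : ℕ) : ℤ)) := zpow_eq_zpow_of_dvd hζ0 hζp hdvd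
        _ = ζ ^ (p - k) := zpow_natCast ζ (p - k)
    -- geometric sum identity
    have hgeom : (1 - c * ζ) * (∑ j ∈ Finset.range p, (c * ζ) ^ j) = 1 - c ^ p := by
      have := geom_sum_mul (c * ζ) p
      have h2 : (∑ j ∈ Finset.range p, (c * ζ) ^ j) * (c * ζ - 1) = (c * ζ) ^ p - 1 := this
      have h3 : (c * ζ) ^ p = c ^ p := by rw [mul_pow, hζp, mul_one]
      linear_combination -h2 - h3
    have hne : (1 - c * ζ) ≠ 0 := by
      intro h
      rw [h, zero_mul] at hgeom
      exact hden hgeom.symm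
    rw [hzp]
    field_simp
    have expand : (∑ i ∈ Finset.range p, ∑ j ∈ Finset.range p, c ^ (i + j) * ζ ^ (p - k + i + j))
        = ζ ^ (p - k) * (∑ j ∈ Finset.range p, (c * ζ) ^ j) ^ 2 := by
      rw [sq, Finset.sum_mul_sum, Finset.mul_sum]
      refine Finset.sum_congr rfl fun i _ => ?_
      rw [Finset.mul_sum]
      refine Finset.sum_congr rfl fun j _ => ?_
      rw [mul_pow, mul_pow, pow_add, pow_add, pow_add]
      ring
    rw [expand, ← hgeom]
    ring
  rw [Finset.sum_congr rfl hterm, ← Finset.sum_div]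
  -- swap order of summation
  rw [Finset.sum_comm]
  have hswap : ∀ i ∈ Finset.range p,
      (∑ ζ ∈ Polynomial.nthRootsFinset p (1 : ℂ),
        ∑ j ∈ Finset.range p, c ^ (i + j) * ζ ^ (p - k + i + j))
      = ∑ j ∈ Finset.range p, c ^ (i + j) *
          (if p ∣ (p - k + i + j) then (p : ℂ) else 0) := by
    intro i _
    rw [Finset.sum_comm]
    refine Finset.sum_congr rfl fun j _ => ?_
    rw [← Finset.mul_sum, sum_nthRoots_pow p hp]
  rw [Finset.sum_congr rfl hswap]
  -- inner sum: single surviving term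
  have hinner : ∀ i ∈ Finset.range p,
      (∑ j ∈ Finset.range p, c ^ (i + j) * (if p ∣ (p - k + i + j) then (p : ℂ) else 0))
      = (if i ≤ k then c ^ k else c ^ (p + k)) * p := by
    intro i hi
    rw [Finset.mem_range] at hi
    by_cases hik : i ≤ k
    · rw [if_pos hik, Finset.sum_eq_single (k - i)]
      · rw [show p - k + i + (k - i) = p from by omega, if_pos dvd_rfl,
          show i + (k - i) = k from by omega]
      · intro j hj hjne
        rw [Finset.mem_range] at hj
        have hnd : ¬ p ∣ p - k + i + j := by
          intro hd
          rcases dvd_small hp hd (by omega) (by omega) with h | h <;> omega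
        rw [if_neg hnd, mul_zero]
      · intro h
        exact absurd (Finset.mem_range.2 (by omega)) h
    · rw [if_neg hik, Finset.sum_eq_single (p + k - i)]
      · rw [show p - k + i + (p + k - i) = p * 2 from by omega, if_pos (dvd_mul_right p 2),
          show i + (p + k - i) = p + k from by omega]
      · intro j hj hjne
        rw [Finset.mem_range] at hj
        have hnd : ¬ p ∣ p - k + i + j := by
          intro hd
          rcases dvd_small hp hd (by omega) (by omega) with h | h <;> omega
        rw [if_neg hnd, mul_zero]
      · intro h
        exact absurd (Finset.mem_range.2 (by omega)) h
  rw [Finset.sum_congr rfl hinner]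
  -- evaluate the outer sum
  have hfilter : Finset.filter (fun i => i ≤ k) (Finset.range p) = Finset.range (k + 1) := by
    ext i
    simp only [Finset.mem_filter, Finset.mem_range]
    omega
  simp only [ite_mul]
  rw [Finset.sum_ite (f := fun _ => c ^ k * p) (g := fun _ => c ^ (p + k) * p)]
  rw [Finset.sum_const, Finset.sum_const, hfilter, Finset.card_range]
  have hcard2 : (Finset.filter (fun i => ¬ i ≤ k) (Finset.range p)).card = p - 1 - k := by
    have : Finset.filter (fun i => ¬ i ≤ k) (Finset.range p)
        = Finset.Ico (k + 1) p := by
      ext i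
      simp only [Finset.mem_filter, Finset.mem_range, Finset.mem_Ico]
      omega
    rw [this, Nat.card_Ico]
    omega
  rw [hcard2]
  -- final algebra
  have hcast : ((p - 1 - k : ℕ) : ℂ) = (p : ℂ) - 1 - (k : ℂ) := by
    push_cast [Nat.cast_sub (by omega : 1 + k ≤ p)]
    have : p - 1 - k = p - (1 + k) := by omega
    rw [this]
    push_cast [Nat.cast_sub (by omega : 1 + k ≤ p)]
    ring
  rw [nsmul_eq_mul, nsmul_eq_mul, hcast]
  rw [pow_add]
  push_cast
  ring
end

section
/- Let V(z) be the formal power series over ℚ with V(0) = 0 satisfying the functional equation V(z) = z·V(z)·S(V(z)), equivalently V(z) = z·∑_{s∈S} V(z)^{s+1}, for a Łukasiewicz step set S. Then [z^n] (V(z)/z) equals the number of Łukasiewicz excursions of length n with step set S. -/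
/-! Both the powers `V ^ k` and the path generating functions `forestGF S k` solve the recurrence
`Q 0 = 1`, `Q (k + 1) = X * ∑ s ∈ S, Q (k + s + 1)`, whose solution is unique since it determines
each coefficient from lower ones. For the powers this is the functional equation multiplied by
`V ^ k`; for the paths it is the decomposition of a path by its first step. Taking `k = 1` gives
the theorem. -/

open PowerSeries

theorem List.finite_length_eq_of_forall_mem {α : Type*} {s : Set α} (hs : s.Finite) (n : ℕ) :
    {l : List α | l.length = n ∧ ∀ x ∈ l, x ∈ s}.Finite := by
  have := hs.to_subtype
  refine ((List.finite_length_eq s n).image (List.map Subtype.val)).subset ?_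
  rintro l ⟨rfl, hl⟩
  lift l to List s using hl
  exact ⟨l, by simp, rfl⟩

section Recurrence

variable {ι : Type*} (S : Finset ι) (e : ι → ℕ)

theorem pow_succ_eq_mul_sum_pow {A : Type*} [CommSemiring A] {x v : A}
    (hv : v = x * ∑ i ∈ S, v ^ e i) (k : ℕ) :
    v ^ (k + 1) = x * ∑ i ∈ S, v ^ (k + e i) := by
  calc v ^ (k + 1) = v ^ k * (x * ∑ i ∈ S, v ^ e i) := by rw [← hv, pow_succ]
    _ = x * ∑ i ∈ S, v ^ (k + e i) := by
      simp only [Finset.mul_sum, pow_add]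
      exact Finset.sum_congr rfl fun i _ => by ring

theorem PowerSeries.eq_of_forall_succ_eq_X_mul_sum {R : Type*} [Semiring R] {f g : ℕ → R⟦X⟧}
    (h0 : f 0 = g 0) (hf : ∀ k, f (k + 1) = X * ∑ i ∈ S, f (k + e i))
    (hg : ∀ k, g (k + 1) = X * ∑ i ∈ S, g (k + e i)) : f = g := by
  suffices h : ∀ n k, coeff n (f k) = coeff n (g k) from
    funext fun k => ext fun n => h n k
  intro n
  induction n with
  | zero => rintro (_ | k) <;> simp [h0, hf, hg]
  | succ n ih => rintro (_ | k) <;> simp [h0, hf, hg, coeff_succ_X_mul, ih]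

end Recurrence

namespace Lukasiewicz

variable (S : Finset ℤ)

def paths (h : ℤ) (n : ℕ) : Set (List ℤ) :=
  {l | l.length = n ∧ (∀ s ∈ l, s ∈ S) ∧ (∀ k : ℕ, 0 ≤ h + (l.take k).sum) ∧ h + l.sum = 0}

variable {S}

theorem paths_finite (h : ℤ) (n : ℕ) : (paths S h n).Finite :=
  (List.finite_length_eq_of_forall_mem S.finite_toSet n).subset fun _ hl => ⟨hl.1, hl.2.1⟩

theorem paths_of_neg {h : ℤ} (hh : h < 0) (n : ℕ) : paths S h n = ∅ :=
  Set.eq_empty_of_forall_notMem fun l hl => hh.not_ge (by simpa using hl.2.2.1 0)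

theorem ncard_paths_zero (h : ℤ) : (paths S h 0).ncard = if h = 0 then 1 else 0 := by
  have : paths S h 0 = if h = 0 then {[]} else ∅ := by
    ext (_ | ⟨s, l⟩) <;> split_ifs with hh <;> simp [paths, hh]
  rw [this]; split_ifs <;> simp

theorem cons_mem_paths_succ {h s : ℤ} {l : List ℤ} {n : ℕ} :
    s :: l ∈ paths S h (n + 1) ↔ 0 ≤ h ∧ s ∈ S ∧ l ∈ paths S (h + s) n := by
  have hprefix : (∀ k : ℕ, 0 ≤ h + ((s :: l).take k).sum) ↔
      0 ≤ h ∧ ∀ k : ℕ, 0 ≤ h + s + (l.take k).sum := by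
    rw [← Nat.and_forall_add_one]
    simp [add_assoc]
  simp only [paths, Set.mem_ofPred_eq, hprefix, List.length_cons, List.mem_cons,
    forall_eq_or_imp, List.sum_cons, ← add_assoc]
  constructor
  · rintro ⟨hn, ⟨hs, hl⟩, ⟨h0, hk⟩, hsum⟩
    exact ⟨h0, hs, by omega, hl, hk, hsum⟩
  · rintro ⟨h0, hs, hn, hl, hk, hsum⟩
    exact ⟨by omega, ⟨hs, hl⟩, ⟨h0, hk⟩, hsum⟩

theorem paths_succ {h : ℤ} (hh : 0 ≤ h) (n : ℕ) :
    paths S h (n + 1) = ⋃ s ∈ (S : Set ℤ), List.cons s '' paths S (h + s) n := by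
  ext (_ | ⟨s, l⟩)
  · simp [paths]
  · simp [cons_mem_paths_succ, hh, and_comm]

theorem ncard_paths_succ {h : ℤ} (hh : 0 ≤ h) (n : ℕ) :
    (paths S h (n + 1)).ncard = ∑ s ∈ S, (paths S (h + s) n).ncard := by
  have hdisj : (S : Set ℤ).PairwiseDisjoint fun s => List.cons s '' paths S (h + s) n :=
    fun s _ t _ hst => Set.disjoint_left.2 <| by
      rintro _ ⟨l, -, rfl⟩ ⟨l', -, heq⟩
      exact hst (List.cons.inj heq).1.symm
  rw [paths_succ hh, S.finite_toSet.ncard_biUnion (fun s _ => (paths_finite _ n).image _)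
    hdisj, finsum_mem_coe_finset]
  simp only [Set.ncard_image_of_injective _ List.cons_injective]

variable (S)

noncomputable def pathGF (h : ℤ) : ℚ⟦X⟧ :=
  mk fun n => ((paths S h n).ncard : ℚ)

/-- `forestGF S k` is the path model of `V ^ k`, the generating function of `k`-tuples of trees:
a forest with `m + 1` nodes is coded by its Łukasiewicz word without the final `-1` step, a path
of length `m` from height `k - 1` to `0`. -/
noncomputable def forestGF (k : ℕ) : ℚ⟦X⟧ :=
  (if k = 0 then 1 else 0) + X * pathGF S (k - 1)

variable {S}

theorem pathGF_of_neg {h : ℤ} (hh : h < 0) : pathGF S h = 0 := by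
  ext n
  simp [pathGF, paths_of_neg hh]

theorem pathGF_eq_add_X_mul_sum {h : ℤ} (hh : 0 ≤ h) :
    pathGF S h = (if h = 0 then 1 else 0) + X * ∑ s ∈ S, pathGF S (h + s) := by
  ext (_ | n)
  · simp [pathGF, ncard_paths_zero]
  · simp [pathGF, ncard_paths_succ hh, coeff_succ_X_mul, apply_ite (coeff (n + 1))]

theorem forestGF_zero : forestGF S 0 = 1 := by
  simp [forestGF, pathGF_of_neg]

theorem forestGF_succ (hneg : (-1 : ℤ) ∈ S) (hnn : ∀ s ∈ S, s ≠ -1 → 0 ≤ s) (k : ℕ) :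
    forestGF S (k + 1) = X * ∑ s ∈ S, forestGF S (k + (s + 1).toNat) := by
  have hterm : ∀ s ∈ S, forestGF S (k + (s + 1).toNat) =
      (if k = 0 ∧ s = -1 then 1 else 0) + X * pathGF S (k + s) := by
    intro s hs
    have hs1 : -1 ≤ s := (eq_or_ne s (-1)).elim (·.ge) fun h => by linarith [hnn s hs h]
    have hzero : k + (s + 1).toNat = 0 ↔ k = 0 ∧ s = -1 := by omega
    have hheight : ((k + (s + 1).toNat : ℕ) : ℤ) - 1 = k + s := by omega
    simp only [forestGF, hzero, hheight]
  have hindicator : (∑ s ∈ S, if k = 0 ∧ s = -1 then (1 : ℚ⟦X⟧) else 0) =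
      if (k : ℤ) = 0 then 1 else 0 := by
    rcases k with _ | k <;> simp [hneg, Nat.cast_add_one_ne_zero]
  rw [Finset.sum_congr rfl hterm, Finset.sum_add_distrib, ← Finset.mul_sum, hindicator,
    ← pathGF_eq_add_X_mul_sum (Int.natCast_nonneg k)]
  simp [forestGF]

end Lukasiewicz

open Lukasiewicz

theorem lukasiewicz_tree_gf_counts_excursions_general
    (S : Finset ℤ) (hneg : (-1 : ℤ) ∈ S)
    (hnn : ∀ s ∈ S, s ≠ -1 → 0 ≤ s)
    (V : PowerSeries ℚ)
    (hV : V = PowerSeries.X * ∑ s ∈ S, V ^ (s + 1).toNat) :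
    ∀ n : ℕ,
      PowerSeries.coeff (n + 1) V =
        (({l : List ℤ | l.length = n ∧ (∀ s ∈ l, s ∈ S) ∧
            (∀ k : ℕ, 0 ≤ (l.take k).sum) ∧ l.sum = 0}).ncard : ℚ) := by
  have hforest : forestGF S = fun k => V ^ k :=
    eq_of_forall_succ_eq_X_mul_sum S (fun s => (s + 1).toNat) (forestGF_zero.trans (pow_zero V).symm)
      (forestGF_succ hneg hnn) (pow_succ_eq_mul_sum_pow S _ hV)
  intro n
  calc coeff (n + 1) V = coeff (n + 1) (forestGF S 1) := by rw [congrFun hforest 1, pow_one]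
    _ = (paths S 0 n).ncard := by simp [forestGF, pathGF, coeff_succ_X_mul]
    _ = _ := by simp [paths]

/-- Let `V` be the formal power series over `ℚ` with zero constant
term satisfying `V = z·∑_{s∈S} V^{s+1}` (equivalently `V = z·V·S(V)`) for a Łukasiewicz
step set `S`. Then the coefficient `[z^n](V/z) = [z^{n+1}]V` equals the number of
Łukasiewicz excursions of length `n` with step set `S`. -/
theorem lukasiewicz_tree_gf_counts_excursions
    (S : Finset ℤ) (hneg : (-1 : ℤ) ∈ S)
    (hnn : ∀ s ∈ S, s ≠ -1 → 0 ≤ s)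
    (V : PowerSeries ℚ)
    (hV0 : PowerSeries.constantCoeff V = 0)
    (hV : V = PowerSeries.X * ∑ s ∈ S, V ^ (s + 1).toNat) :
    ∀ n : ℕ,
      PowerSeries.coeff (n + 1) V =
        (({l : List ℤ | l.length = n ∧ (∀ s ∈ l, s ∈ S) ∧
            (∀ k : ℕ, 0 ≤ (l.take k).sum) ∧ l.sum = 0}).ncard : ℚ) :=
  lukasiewicz_tree_gf_counts_excursions_general S hneg hnn V hV
end

section
/- Let n ≥ 1 and 1 ≤ r. The number of Dyck excursions of length 2n (paths with steps ±1, from 0 to 0, never negative) weighted by their number of r-ascents, i.e., the total number of r-ascents summed over all Dyck paths of length 2n, equals binom(2n - r - 1, n - 1). Consequently the expected number of r-ascents in a uniformly random Dyck path of length 2n is binom(2n-r-1, n-1)/C_n. -/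
/-!
Appending a down step to a Dyck path `l` gives a word `l ++ [-1]` of sum `-1` whose proper
prefix sums are all nonnegative, and by the cycle lemma every `±1` word of sum `-1` has exactly
one rotation of this kind. An `r`-ascent of `l` together with the down steps around it (the
appended step serving at either end) is a cyclic occurrence of `D Uʳ D` in `l ++ [-1]`. Rotating
it to the front, pairs (Dyck path, `r`-ascent) correspond to `±1` words of length `2n + 1` and
sum `-1` that begin with `D Uʳ D`, that is, to arbitrary `±1` words of length `2n - r - 1` with
`n - 1` down steps; there are `binom(2n - r - 1, n - 1)` of those.
-/

/-- The number of `r`-ascents of a lattice path given by its list of steps: the number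
of maximal runs of exactly `r` consecutive `+1` steps. -/
def numRAscents (r : ℕ) (l : List ℤ) : ℕ :=
  ((l.splitBy (fun a b => a == b)).filter
    (fun g => g.length == r && g.head? == some 1)).length

open Finset

def signWords : ℕ → Finset (List ℤ)
  | 0 => {[]}
  | m + 1 => (signWords m).map ⟨List.cons 1, List.cons_injective⟩ ∪
      (signWords m).map ⟨List.cons (-1), List.cons_injective⟩

theorem mem_signWords {m : ℕ} {w : List ℤ} :
    w ∈ signWords m ↔ w.length = m ∧ ∀ x ∈ w, x = 1 ∨ x = -1 := by
  induction m generalizing w with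
  | zero => simp +contextual [signWords, List.length_eq_zero_iff]
  | succ m ih =>
    cases w with
    | nil => simp [signWords]
    | cons x w =>
      simp only [signWords, mem_union, mem_map, Function.Embedding.coeFn_mk,
        List.cons.injEq, ih, List.length_cons, List.forall_mem_cons]
      constructor
      · rintro (⟨w', hw', rfl, rfl⟩ | ⟨w', hw', rfl, rfl⟩) <;> simp_all
      · rintro ⟨hlen, hx | hx, hw⟩
        · exact Or.inl ⟨w, ⟨by omega, hw⟩, hx.symm, rfl⟩
        · exact Or.inr ⟨w, ⟨by omega, hw⟩, hx.symm, rfl⟩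

theorem card_signWords_filter_count (m k : ℕ) :
    #{w ∈ signWords m | w.count (-1) = k} = m.choose k := by
  induction m generalizing k with
  | zero => cases k <;> simp [signWords, filter_singleton]
  | succ m ih =>
    have hdisj : Disjoint ((signWords m).map ⟨List.cons 1, List.cons_injective⟩)
        ((signWords m).map ⟨List.cons (-1), List.cons_injective⟩) := by
      simp [disjoint_left]
    rw [signWords, filter_union, card_union_of_disjoint
      (disjoint_filter_filter hdisj), filter_map, filter_map,
      card_map, card_map]
    cases k with
    | zero => simp [ih]
    | succ k => simp [ih, Nat.choose_succ_succ', add_comm]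

theorem sum_eq_length_sub_two_mul_count {w : List ℤ} (hw : ∀ x ∈ w, x = 1 ∨ x = -1) :
    w.sum = w.length - 2 * w.count (-1) := by
  induction w with
  | nil => simp
  | cons x w ih =>
    rw [List.forall_mem_cons] at hw
    rcases hw with ⟨rfl | rfl, hw⟩ <;> simp [ih hw] <;> ring

theorem card_signWords_filter_sum (m k : ℕ) :
    #{w ∈ signWords m | w.sum = (m : ℤ) - 2 * k} = m.choose k := by
  rw [← card_signWords_filter_count]
  congr 1
  refine filter_congr fun w hw => ?_
  obtain ⟨rfl, hpm⟩ := mem_signWords.mp hw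
  rw [sum_eq_length_sub_two_mul_count hpm]
  omega

theorem card_signWords_filter_prefix {p : List ℤ} (hp : ∀ x ∈ p, x = 1 ∨ x = -1) {m : ℕ}
    (hm : p.length ≤ m) (s : ℤ) :
    #{u ∈ signWords m | u.sum = s ∧ p <+: u} =
      #{w ∈ signWords (m - p.length) | w.sum = s - p.sum} := by
  symm
  refine card_bij' (fun w _ => p ++ w) (fun u _ => u.drop p.length) (fun w hw => ?_)
    (fun u hu => ?_) (fun w _ => List.drop_left) (fun u hu => ?_)
  · simp only [mem_filter, mem_signWords] at hw ⊢
    refine ⟨⟨by simp; omega, fun x hx => ?_⟩, by simp; omega, List.prefix_append _ _⟩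
    rcases List.mem_append.mp hx with hx | hx
    exacts [hp x hx, hw.1.2 x hx]
  · simp only [mem_filter, mem_signWords] at hu ⊢
    obtain ⟨⟨hlen, hpm⟩, hsum, hpre⟩ := hu
    rw [← List.prefix_iff_eq_append.mp hpre, List.sum_append] at hsum
    exact ⟨⟨by simp; omega, fun x hx => hpm x (List.mem_of_mem_drop hx)⟩, by omega⟩
  · simp only [mem_filter] at hu
    exact List.prefix_iff_eq_append.mp hu.2.2

namespace List

def ProperPrefixSumsNonneg (u : List ℤ) : Prop :=
  ∀ m < u.length, 0 ≤ (u.take m).sum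

instance : DecidablePred ProperPrefixSumsNonneg := fun u => by
  unfold ProperPrefixSumsNonneg; infer_instance

theorem take_rotate_eq_take_drop_append_self {α : Type*} (u : List α) {k m : ℕ}
    (hk : k ≤ u.length) (hm : m ≤ u.length) :
    (u.rotate k).take m = ((u ++ u).drop k).take m := by
  rw [rotate_eq_drop_append_take hk, drop_append_of_le_length hk, take_append, take_append,
    take_take, length_drop]
  congr 2
  omega

theorem sum_take_rotate (u : List ℤ) {k m : ℕ} (hk : k ≤ u.length) (hm : m ≤ u.length) :
    ((u.rotate k).take m).sum = ((u ++ u).take (k + m)).sum - ((u ++ u).take k).sum := by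
  rw [take_rotate_eq_take_drop_append_self u hk hm, take_add, sum_append]
  ring

theorem sum_take_append_self_length_add (u : List ℤ) {j : ℕ} (hj : j ≤ u.length) :
    ((u ++ u).take (u.length + j)).sum = u.sum + ((u ++ u).take j).sum := by
  rw [take_length_add_append, sum_append, take_append_of_le_length hj]

theorem properPrefixSumsNonneg_rotate_iff (u : List ℤ) {k : ℕ} (hk : k ≤ u.length) :
    (u.rotate k).ProperPrefixSumsNonneg ↔
      ∀ m < u.length, ((u ++ u).take k).sum ≤ ((u ++ u).take (k + m)).sum := by
  simp only [ProperPrefixSumsNonneg, length_rotate]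
  refine forall₂_congr fun m hm => ?_
  rw [sum_take_rotate u hk hm.le, sub_nonneg]

theorem exists_rotate_properPrefixSumsNonneg {u : List ℤ} (hu : u.sum = -1) :
    ∃ k < u.length, (u.rotate k).ProperPrefixSumsNonneg := by
  set S : ℕ → ℤ := fun j => ((u ++ u).take j).sum
  have hL : 0 < u.length := length_pos_iff.mpr (by rintro h; simp [h] at hu)
  have hmin : ∃ k, k < u.length ∧ ∀ j < u.length, S k ≤ S j := by
    obtain ⟨k, hk, hk_min⟩ :=
      (Finset.range u.length).exists_min_image S (nonempty_range_iff.mpr hL.ne')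
    exact ⟨k, mem_range.mp hk, fun j hj => hk_min j (mem_range.mpr hj)⟩
  -- start at the first minimum of the prefix sums over `[0, u.length)`
  obtain ⟨hk, hk_min⟩ := Nat.find_spec hmin
  have hk_first : ∀ j < Nat.find hmin, S (Nat.find hmin) < S j := fun j hj => by
    obtain ⟨i, hi, hlt⟩ : ∃ i < u.length, S i < S j := by
      simpa [hk.trans' hj] using Nat.find_min hmin hj
    exact (hk_min i hi).trans_lt hlt
  refine ⟨Nat.find hmin, hk, (properPrefixSumsNonneg_rotate_iff u hk.le).mpr fun m hm => ?_⟩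
  show S (Nat.find hmin) ≤ S (Nat.find hmin + m)
  by_cases hkm : Nat.find hmin + m < u.length
  · exact hk_min _ hkm
  · have hwrap : S (Nat.find hmin + m) = -1 + S (Nat.find hmin + m - u.length) := by
      rw [← hu, ← sum_take_append_self_length_add u (by omega), Nat.add_sub_cancel' (by omega)]
    have := hk_first (Nat.find hmin + m - u.length) (by omega)
    omega

theorem eq_of_rotate_properPrefixSumsNonneg {u : List ℤ} (hu : u.sum = -1) {a b : ℕ}
    (ha : a < u.length) (hb : b < u.length) (ha_good : (u.rotate a).ProperPrefixSumsNonneg)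
    (hb_good : (u.rotate b).ProperPrefixSumsNonneg) : a = b := by
  wlog hab : a < b generalizing a b
  · rcases (not_lt.mp hab).eq_or_lt with h | h
    · exact h.symm
    · exact (this hb ha hb_good ha_good h).symm
  rw [properPrefixSumsNonneg_rotate_iff u ha.le] at ha_good
  rw [properPrefixSumsNonneg_rotate_iff u hb.le] at hb_good
  have h₁ := ha_good (b - a) (by omega)
  have h₂ := hb_good (u.length + a - b) (by omega)
  rw [show a + (b - a) = b by omega] at h₁
  rw [show b + (u.length + a - b) = u.length + a by omega,
    sum_take_append_self_length_add u ha.le, hu] at h₂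
  omega

theorem rotate_rotate_length_sub_mod {α : Type*} (u : List α) {k : ℕ} (hk : k ≤ u.length) :
    (u.rotate k).rotate ((u.length - k) % u.length) = u := by
  conv_lhs => rw [← length_rotate u k, rotate_mod, rotate_rotate, length_rotate,
    Nat.add_sub_cancel' hk, rotate_length]

end List

theorem Nat.eq_of_sub_mod_eq_sub_mod {L k k' : ℕ} (hk : k < L) (hk' : k' < L)
    (h : (L - k) % L = (L - k') % L) : k = k' := by
  have key : ∀ j < L, (L - j) % L = if j = 0 then 0 else L - j := fun j hj => by
    split_ifs with hj0
    · simp [hj0]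
    · exact Nat.mod_eq_of_lt (by omega)
  rw [key k hk, key k' hk'] at h
  split_ifs at h <;> omega

/-- The cycle lemma in counting form: `(c, k) ↦ c.rotate k` is a bijection onto `U`. -/
theorem sum_card_filter_rotate_eq_card_filter (U : Finset (List ℤ))
    (hU_sum : ∀ u ∈ U, u.sum = -1) (hU_rot : ∀ u ∈ U, ∀ k, u.rotate k ∈ U)
    (P : List ℤ → Prop) [DecidablePred P] :
    ∑ c ∈ U with c.ProperPrefixSumsNonneg, #{k ∈ range c.length | P (c.rotate k)} =
      #{u ∈ U | P u} := by
  rw [← card_sigma]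
  refine card_bij (fun x _ => x.1.rotate x.2) ?_ ?_ ?_
  · rintro ⟨c, k⟩ hx
    simp only [mem_sigma, mem_filter, mem_range] at hx ⊢
    exact ⟨hU_rot c hx.1.1 k, hx.2.2⟩
  · rintro ⟨c, k⟩ hx ⟨c', k'⟩ hx' (h : c.rotate k = c'.rotate k')
    simp only [mem_sigma, mem_filter, mem_range] at hx hx'
    have hlen : c'.length = c.length := by simpa using congrArg List.length h.symm
    have hc := List.rotate_rotate_length_sub_mod c hx.2.1.le
    have hc' := List.rotate_rotate_length_sub_mod c' hx'.2.1.le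
    rw [← h, hlen] at hc'
    have hL : 0 < c.length := hx.2.1.trans_le' (Nat.zero_le k)
    have hidx := List.eq_of_rotate_properPrefixSumsNonneg (hU_sum _ (hU_rot c hx.1.1 k))
      (by simpa using Nat.mod_lt _ hL) (by simpa using Nat.mod_lt _ hL)
      (hc.symm ▸ hx.1.2) (hc'.symm ▸ hx'.1.2)
    obtain rfl := Nat.eq_of_sub_mod_eq_sub_mod hx.2.1 (hlen ▸ hx'.2.1) hidx
    rw [← hc, ← hc']
  · intro u hu
    rw [mem_filter] at hu
    obtain ⟨k, hk, hgood⟩ := List.exists_rotate_properPrefixSumsNonneg (hU_sum u hu.1)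
    refine ⟨⟨u.rotate k, (u.length - k) % u.length⟩, ?_,
      List.rotate_rotate_length_sub_mod u hk.le⟩
    simp only [mem_sigma, mem_filter, mem_range, List.length_rotate,
      List.rotate_rotate_length_sub_mod u hk.le]
    exact ⟨⟨hU_rot u hu.1 k, hgood⟩, Nat.mod_lt _ (hk.trans_le' (Nat.zero_le k)), hu.2⟩

def occurrences (p d : List ℤ) : ℕ := #{i ∈ range d.length | p <+: d.drop i}

theorem occurrences_cons (p d : List ℤ) (x : ℤ) :
    occurrences p (x :: d) = (if p <+: x :: d then 1 else 0) + occurrences p d := by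
  simp only [occurrences, card_filter, List.length_cons, sum_range_succ', List.drop_succ_cons,
    List.drop_zero]
  ring

def cyclicOccurrences (p c : List ℤ) : ℕ := #{k ∈ range c.length | p <+: c.rotate k}

theorem cyclicOccurrences_rotate_one (p c : List ℤ) :
    cyclicOccurrences p (c.rotate 1) = cyclicOccurrences p c := by
  let f : ℕ → ℕ := fun k => if p <+: c.rotate k then 1 else 0
  have h₁ := sum_range_succ' f c.length
  have h₂ := sum_range_succ f c.length
  have hf : f c.length = f 0 := by simp [f]
  simp only [cyclicOccurrences, card_filter, List.length_rotate, List.rotate_rotate]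
  simp only [f, add_comm 1] at h₁ h₂ hf ⊢
  omega

theorem List.exists_cons_eq_replicate_append {α : Type*} (y : α) (l : List α) :
    ∃ a t, y :: l = replicate (a + 1) y ++ t ∧ t.head? ≠ some y := by
  induction l with
  | nil => exact ⟨0, [], by simp⟩
  | cons z l ih =>
    by_cases hz : z = y
    · obtain ⟨a, t, h, ht⟩ := ih
      exact ⟨a + 1, t, by rw [hz, h]; rfl, ht⟩
    · exact ⟨0, z :: l, by simp, by simpa using hz⟩

theorem numRAscents_replicate_append (r : ℕ) (y : ℤ) (a : ℕ) {t : List ℤ}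
    (ht : t.head? ≠ some y) :
    numRAscents r (List.replicate (a + 1) y ++ t) =
      (if y = 1 ∧ a + 1 = r then 1 else 0) + numRAscents r t := by
  have hsplit : (List.replicate (a + 1) y ++ t).splitBy (fun a b => a == b) =
      List.replicate (a + 1) y :: t.splitBy (fun a b => a == b) := by
    rw [List.splitBy_append, List.splitBy_of_isChain (by simp)]
    · rfl
    · exact List.isChain_replicate_of_rel _ (by simp)
    · intro x hx z hz
      simp only [List.getLast?_replicate, Nat.add_one_ne_zero, if_false, Option.mem_some_iff] at hx
      rw [beq_eq_false_iff_ne]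
      rintro rfl
      exact ht (hx ▸ hz)
  rw [numRAscents, numRAscents, hsplit, List.filter_cons]
  by_cases hy : y = 1 ∧ a + 1 = r
  · obtain ⟨rfl, rfl⟩ := hy
    simp [List.replicate_succ, add_comm]
  · have hy' : ¬(a + 1 = r ∧ y = 1) := fun h => hy h.symm
    simp [List.replicate_succ, hy, hy']

def ascentPattern (r : ℕ) : List ℤ := -1 :: (List.replicate r 1 ++ [-1])

@[simp]
theorem length_ascentPattern (r : ℕ) : (ascentPattern r).length = r + 2 := by
  simp [ascentPattern]

@[simp]
theorem sum_ascentPattern (r : ℕ) : (ascentPattern r).sum = r - 2 := by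
  simp [ascentPattern]
  ring

theorem mem_ascentPattern {r : ℕ} : ∀ x ∈ ascentPattern r, x = 1 ∨ x = -1 := by
  simp only [ascentPattern, List.mem_cons, List.mem_append, List.mem_replicate]
  tauto

theorem replicate_one_append_prefix_iff {r b : ℕ} {Z : List ℤ} :
    List.replicate r 1 ++ [-1] <+: List.replicate b 1 ++ -1 :: Z ↔ r = b := by
  induction r generalizing b with
  | zero => cases b <;> simp [List.replicate_succ]
  | succ r ih => cases b <;> simp [List.replicate_succ, ih]

theorem ascentPattern_prefix_iff {r b : ℕ} {Z : List ℤ} :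
    ascentPattern r <+: -1 :: (List.replicate b 1 ++ -1 :: Z) ↔ r = b := by
  rw [ascentPattern, List.cons_prefix_cons, replicate_one_append_prefix_iff]
  simp

theorem not_ascentPattern_prefix_one_cons (r : ℕ) (X : List ℤ) :
    ¬ ascentPattern r <+: 1 :: X := by
  simp [ascentPattern]

theorem not_ascentPattern_prefix_neg_one_cons_neg_one_cons {r : ℕ} (hr : 1 ≤ r) (X : List ℤ) :
    ¬ ascentPattern r <+: -1 :: -1 :: X := by
  obtain ⟨r, rfl⟩ := Nat.exists_eq_add_of_le' hr
  simp [ascentPattern, List.replicate_succ]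

theorem occurrences_ascentPattern_replicate_one_append (r b : ℕ) (X : List ℤ) :
    occurrences (ascentPattern r) (List.replicate b 1 ++ X) = occurrences (ascentPattern r) X := by
  induction b with
  | zero => rfl
  | succ b ih =>
    rw [List.replicate_succ, List.cons_append, occurrences_cons,
      if_neg (not_ascentPattern_prefix_one_cons r _), ih, zero_add]

theorem occurrences_ascentPattern_neg_one_cons_neg_one_cons {r : ℕ} (hr : 1 ≤ r)
    (X : List ℤ) :
    occurrences (ascentPattern r) (-1 :: -1 :: X) = occurrences (ascentPattern r) (-1 :: X) := by
  rw [occurrences_cons, if_neg (not_ascentPattern_prefix_neg_one_cons_neg_one_cons hr X), zero_add]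

theorem occurrences_ascentPattern_neg_one_cons_replicate_append {r : ℕ} (hr : 1 ≤ r) (b : ℕ)
    (X : List ℤ) :
    occurrences (ascentPattern r) (-1 :: (List.replicate b (-1) ++ X)) =
      occurrences (ascentPattern r) (-1 :: X) := by
  induction b with
  | zero => rfl
  | succ b ih =>
    rw [List.replicate_succ, List.cons_append,
      occurrences_ascentPattern_neg_one_cons_neg_one_cons hr, ih]

theorem numRAscents_eq_occurrences {r : ℕ} (hr : 1 ≤ r) :
    ∀ l : List ℤ, (∀ x ∈ l, x = 1 ∨ x = -1) →
      numRAscents r l = occurrences (ascentPattern r) (-1 :: (l ++ [-1]))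
  | [], _ => by
    rw [List.nil_append, occurrences_ascentPattern_neg_one_cons_neg_one_cons hr, occurrences_cons]
    simp [numRAscents, occurrences, ascentPattern]
  | y :: l, hl => by
    obtain ⟨a, t, hdecomp, ht⟩ := List.exists_cons_eq_replicate_append y l
    have ht_pm : ∀ x ∈ t, x = 1 ∨ x = -1 := fun x hx => hl x (hdecomp ▸ by simp [hx])
    have : t.length ≤ l.length := by
      have := congrArg List.length hdecomp
      simp at this
      omega
    have ih := numRAscents_eq_occurrences hr t ht_pm
    rw [hdecomp, numRAscents_replicate_append r y a ht, ih, List.append_assoc]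
    rcases hl y (by simp) with rfl | rfl
    · obtain ⟨Z, hZ⟩ : ∃ Z, t ++ [-1] = -1 :: Z := by
        cases t with
        | nil => exact ⟨[], rfl⟩
        | cons x t =>
          obtain rfl : x = -1 := (ht_pm x (by simp)).resolve_left (by simpa using ht)
          exact ⟨t ++ [-1], rfl⟩
      rw [hZ, occurrences_ascentPattern_neg_one_cons_neg_one_cons hr,
        occurrences_cons _ (List.replicate (a + 1) 1 ++ -1 :: Z),
        occurrences_ascentPattern_replicate_one_append]
      simp [ascentPattern_prefix_iff, eq_comm]
    · rw [if_neg (by norm_num), zero_add,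
        occurrences_ascentPattern_neg_one_cons_replicate_append hr]
termination_by l => l.length

theorem ascentPattern_prefix_append_neg_one_cons_iff {r : ℕ} {X Z : List ℤ} (hX : X ≠ []) :
    ascentPattern r <+: X ++ -1 :: Z ↔ ascentPattern r <+: X ++ [-1] := by
  have hXZ : X ++ [-1] <+: X ++ -1 :: Z := by simp
  refine ⟨fun h => ?_, fun h => h.trans hXZ⟩
  by_cases hlen : (ascentPattern r).length ≤ (X ++ [-1]).length
  · exact List.prefix_of_prefix_length_le h hXZ hlen
  -- otherwise `X ++ [-1]` is a prefix of the pattern ending inside its block of up steps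
  obtain ⟨x, X, rfl⟩ := List.exists_cons_of_ne_nil hX
  have h' := List.prefix_of_prefix_length_le hXZ h (by omega)
  simp only [ascentPattern, List.cons_append, List.cons_prefix_cons] at h'
  have hrep : X ++ [-1] <+: List.replicate r 1 :=
    List.prefix_of_prefix_length_le h'.2 (List.prefix_append _ _)
      (by simp [ascentPattern] at hlen ⊢; omega)
  have := List.eq_of_mem_replicate (hrep.subset (by simp : (-1 : ℤ) ∈ X ++ [-1]))
  norm_num at this

theorem cyclicOccurrences_ascentPattern_cons {r : ℕ} {l : List ℤ} (hl : r + 1 ≤ l.length) :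
    cyclicOccurrences (ascentPattern r) (-1 :: l) =
      occurrences (ascentPattern r) (-1 :: (l ++ [-1])) := by
  have hlast : ¬ ascentPattern r <+: (-1 :: (l ++ [-1])).drop (l.length + 1) := by
    simp [ascentPattern]
  rw [occurrences, cyclicOccurrences, List.length_cons, List.length_cons, List.length_append,
    List.length_singleton, range_add_one (n := l.length + 1), filter_insert, if_neg hlast]
  congr 1
  refine filter_congr fun k hk => ?_
  rw [mem_range] at hk
  cases k with
  | zero =>
    rw [List.rotate_zero, List.drop_zero, ← List.cons_append]
    exact ⟨fun h => h.trans (List.prefix_append _ _),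
      fun h => List.prefix_of_prefix_length_le h (List.prefix_append _ _)
        (by simp [ascentPattern]; omega)⟩
  | succ k =>
    rw [List.rotate_cons_succ, List.rotate_eq_drop_append_take (by simp; omega),
      List.drop_append_of_le_length (by omega), List.drop_succ_cons,
      List.drop_append_of_le_length (by omega), List.append_assoc, List.singleton_append,
      ascentPattern_prefix_append_neg_one_cons_iff (by simp; omega)]

theorem numRAscents_eq_cyclicOccurrences {r : ℕ} (hr : 1 ≤ r) {l : List ℤ}
    (hl : r + 1 ≤ l.length) (hl_pm : ∀ x ∈ l, x = 1 ∨ x = -1) :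
    numRAscents r l = cyclicOccurrences (ascentPattern r) (l ++ [-1]) := by
  rw [numRAscents_eq_occurrences hr l hl_pm, ← cyclicOccurrences_ascentPattern_cons hl,
    ← cyclicOccurrences_rotate_one, List.rotate_cons_succ, List.rotate_zero]

open Classical in
noncomputable def dyckPaths (n : ℕ) : Finset (List ℤ) :=
  {l ∈ signWords (2 * n) | (∀ k : ℕ, 0 ≤ (l.take k).sum) ∧ l.sum = 0}

theorem coe_dyckPaths (n : ℕ) :
    (dyckPaths n : Set (List ℤ)) =
      {l : List ℤ | l.length = 2 * n ∧ (∀ s ∈ l, s = 1 ∨ s = -1) ∧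
        (∀ k : ℕ, 0 ≤ (l.take k).sum) ∧ l.sum = 0} := by
  ext l
  simp [dyckPaths, mem_signWords, and_assoc]

theorem properPrefixSumsNonneg_append_neg_one_iff (l : List ℤ) :
    (l ++ [-1]).ProperPrefixSumsNonneg ↔ ∀ k : ℕ, 0 ≤ (l.take k).sum := by
  simp only [List.ProperPrefixSumsNonneg, List.length_append, List.length_singleton,
    Nat.lt_succ_iff]
  refine ⟨fun h k => ?_, fun h m hm => ?_⟩
  · rcases le_total k l.length with hk | hk
    · simpa [List.take_append_of_le_length hk] using h k hk
    · simpa [List.take_of_length_le hk] using h l.length le_rfl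
  · simpa [List.take_append_of_le_length hm] using h m

theorem dropLast_append_neg_one_of_properPrefixSumsNonneg {c : List ℤ}
    (hc : ∀ x ∈ c, x = 1 ∨ x = -1) (hsum : c.sum = -1) (hgood : c.ProperPrefixSumsNonneg) :
    c.dropLast ++ [-1] = c := by
  have hne : c ≠ [] := by rintro rfl; simp at hsum
  have hsplit := List.dropLast_append_getLast hne
  have hinit : 0 ≤ c.dropLast.sum := by
    rw [List.dropLast_eq_take]
    exact hgood _ (by simpa [List.length_pos_iff] using hne)
  have hlast : c.getLast hne = -1 := by
    have := congrArg List.sum hsplit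
    rw [List.sum_append, List.sum_singleton, hsum] at this
    rcases hc _ (List.getLast_mem hne) with h | h <;> omega
  rwa [hlast] at hsplit

theorem mem_dyckPaths_iff_append_neg_one {n : ℕ} {l : List ℤ} :
    l ∈ dyckPaths n ↔ l ++ [-1] ∈ {u ∈ signWords (2 * n + 1) | u.sum = -1} ∧
      (l ++ [-1]).ProperPrefixSumsNonneg := by
  simp only [dyckPaths, mem_filter, mem_signWords, properPrefixSumsNonneg_append_neg_one_iff,
    List.length_append, List.length_singleton, List.mem_append, List.mem_singleton,
    List.sum_append, List.sum_singleton]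
  constructor
  · rintro ⟨⟨hlen, hpm⟩, hpre, hsum⟩
    refine ⟨⟨⟨by omega, fun x hx => ?_⟩, by omega⟩, hpre⟩
    rcases hx with hx | rfl
    exacts [hpm x hx, Or.inr rfl]
  · rintro ⟨⟨⟨hlen, hpm⟩, hsum⟩, hpre⟩
    exact ⟨⟨by omega, fun x hx => hpm x (Or.inl hx)⟩, hpre, by omega⟩

theorem sum_dyckPaths_eq_sum_properPrefixSumsNonneg (n : ℕ) (f : List ℤ → ℕ) :
    ∑ l ∈ dyckPaths n, f (l ++ [-1]) =
      ∑ c ∈ {u ∈ signWords (2 * n + 1) | u.sum = -1} with c.ProperPrefixSumsNonneg, f c := by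
  have hinv : ∀ c ∈ ({u ∈ signWords (2 * n + 1) | u.sum = -1} : Finset _).filter
      List.ProperPrefixSumsNonneg, c.dropLast ++ [-1] = c := fun c hc => by
    simp only [mem_filter, mem_signWords] at hc
    exact dropLast_append_neg_one_of_properPrefixSumsNonneg hc.1.1.2 hc.1.2 hc.2
  refine sum_nbij' (· ++ [-1]) List.dropLast (fun l hl => ?_) (fun c hc => ?_)
    (fun _ _ => List.dropLast_concat) hinv (fun _ _ => rfl)
  · exact mem_filter.mpr (mem_dyckPaths_iff_append_neg_one.mp hl)
  · rw [mem_dyckPaths_iff_append_neg_one, hinv c hc, ← mem_filter]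
    exact hc

theorem sum_numRAscents_dyckPaths {n r : ℕ} (hn : 1 ≤ n) (hr : 1 ≤ r) (hrn : r ≤ n) :
    ∑ l ∈ dyckPaths n, numRAscents r l = (2 * n - r - 1).choose (n - 1) := by
  calc ∑ l ∈ dyckPaths n, numRAscents r l
      = ∑ l ∈ dyckPaths n, cyclicOccurrences (ascentPattern r) (l ++ [-1]) := by
        refine sum_congr rfl fun l hl => ?_
        obtain ⟨⟨hlen, hpm⟩, -⟩ := by simpa [dyckPaths, mem_signWords] using hl
        exact numRAscents_eq_cyclicOccurrences hr (by omega) hpm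
    _ = ∑ c ∈ {u ∈ signWords (2 * n + 1) | u.sum = -1} with c.ProperPrefixSumsNonneg,
          cyclicOccurrences (ascentPattern r) c :=
        sum_dyckPaths_eq_sum_properPrefixSumsNonneg n _
    _ = #{u ∈ signWords (2 * n + 1) | u.sum = -1 ∧ ascentPattern r <+: u} := by
        rw [← filter_filter]
        refine sum_card_filter_rotate_eq_card_filter _ (fun u hu => (mem_filter.mp hu).2)
          (fun u hu k => ?_) _
        simp only [mem_filter, mem_signWords, List.length_rotate, List.mem_rotate] at hu ⊢
        exact ⟨hu.1, (List.rotate_perm u k).sum_eq.trans hu.2⟩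
    _ = #{w ∈ signWords (2 * n - r - 1) | w.sum = 1 - (r : ℤ)} := by
        rw [card_signWords_filter_prefix mem_ascentPattern (by simp; omega), length_ascentPattern,
          sum_ascentPattern, show 2 * n + 1 - (r + 2) = 2 * n - r - 1 by omega]
        ring_nf
    _ = (2 * n - r - 1).choose (n - 1) := by
        rw [← card_signWords_filter_sum,
          show (1 - r : ℤ) = ((2 * n - r - 1 : ℕ) : ℤ) - 2 * ((n - 1 : ℕ) : ℤ) by omega]

/-- For `n ≥ 1` and `1 ≤ r ≤ n`, the total number of `r`-ascents
summed over all Dyck paths of length `2n` (paths with steps `±1`, from `0` to `0`,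
never negative) equals `binom(2n - r - 1, n - 1)`; consequently the expected number of
`r`-ascents of a uniformly random Dyck path of length `2n` is
`binom(2n - r - 1, n - 1)/C_n`. -/
theorem total_rAscents_dyck (n r : ℕ) (hn : 1 ≤ n) (hr : 1 ≤ r) (hrn : r ≤ n) :
    (∑ᶠ l ∈ {l : List ℤ | l.length = 2 * n ∧ (∀ s ∈ l, s = 1 ∨ s = -1) ∧
        (∀ k : ℕ, 0 ≤ (l.take k).sum) ∧ l.sum = 0}, numRAscents r l) =
      Nat.choose (2 * n - r - 1) (n - 1) ∧
    ((∑ᶠ l ∈ {l : List ℤ | l.length = 2 * n ∧ (∀ s ∈ l, s = 1 ∨ s = -1) ∧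
        (∀ k : ℕ, 0 ≤ (l.take k).sum) ∧ l.sum = 0}, numRAscents r l : ℕ) : ℚ) /
        (catalan n : ℚ) =
      (Nat.choose (2 * n - r - 1) (n - 1) : ℚ) / (catalan n : ℚ) := by
  rw [← coe_dyckPaths, finsum_mem_coe_finset, sum_numRAscents_dyckPaths hn hr hrn]
  exact ⟨rfl, rfl⟩
end

section
/- For integers n ≥ 1 and r ≥ 1 with n ≥ r, one has the coefficient identity [Z^n] ((1 - √(1-4Z))^r (1 + √(1-4Z)))/(2^{r+1} √(1-4Z)) = binom(2n - r - 1, n - 1), where the expressions are formal power series in Z over ℚ and √(1-4Z) is the formal square root with constant term 1. -/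
/-!
Writing `1 + W = 2 - (1 - W)` splits the series into `2 Hᵣ - Hᵣ₊₁` with `Hᵣ = (1 - W)ʳ / W`.
Since `(1 - W)² = 2 (1 - W) - 4X`, the `Hᵣ` satisfy a two-term recurrence in `r`, which by
Pascal's rule is also satisfied by `2ʳ binom(r + 2k, k)`; so `[X^(r + k)] Hᵣ = 2ʳ binom(r + 2k, k)`
once it holds for `r = 0, 1`. Those base cases come down to `[Xⁿ] W⁻¹ = binom(2n, n)`, which follows
from the differential equation `(1 - 4X) (W⁻¹)' = 2 W⁻¹`. Pascal's rule once more combines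
`2 Hᵣ - Hᵣ₊₁` into the stated binomial coefficient.
-/

open PowerSeries

namespace PowerSeries

theorem coeff_X_mul_derivative {R : Type*} [CommSemiring R] (f : R⟦X⟧) (n : ℕ) :
    coeff n (X * d⁄dX R f) = n * coeff n f := by
  cases n with
  | zero => simp
  | succ n => rw [coeff_succ_X_mul, coeff_derivative, Nat.cast_succ, mul_comm]

theorem coeff_eq_centralBinom_mul_of_derivative {K : Type*} [Field K] [CharZero K]
    {f : K⟦X⟧} (hf : (1 - 4 * X) * d⁄dX K f = 2 * f) (n : ℕ) :
    coeff n f = Nat.centralBinom n * constantCoeff f := by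
  induction n with
  | zero => simp
  | succ n ih =>
    have hrec : ((n : K) + 1) * coeff (n + 1) f = (4 * n + 2) * coeff n f := by
      have h := congrArg (coeff n) hf
      rw [sub_mul, one_mul, mul_assoc, map_sub, ← map_ofNat C 4, ← map_ofNat C 2, coeff_C_mul,
        coeff_C_mul, coeff_X_mul_derivative, coeff_derivative] at h
      linear_combination h
    have hcb : ((n : K) + 1) * Nat.centralBinom (n + 1) = (4 * n + 2) * Nat.centralBinom n := by
      exact_mod_cast (Nat.succ_mul_centralBinom_succ n).trans (by ring)
    refine mul_left_cancel₀ (Nat.cast_add_one_ne_zero n) ?_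
    rw [hrec, ih]
    linear_combination -constantCoeff f * hcb

section OneSubW

variable {R : Type*} [CommRing R] {W : R⟦X⟧}

theorem one_sub_pow_add_two_mul_of_sq_eq (hW : W ^ 2 = 1 - 4 * X) (f : R⟦X⟧) (r : ℕ) :
    (1 - W) ^ (r + 2) * f = 2 * ((1 - W) ^ (r + 1) * f) - 4 * (X * ((1 - W) ^ r * f)) := by
  linear_combination (1 - W) ^ r * f * hW

theorem coeff_one_sub_pow_mul_eq_zero (hW0 : constantCoeff W = 1) (f : R⟦X⟧) {n r : ℕ}
    (h : n < r) : coeff n ((1 - W) ^ r * f) = 0 := by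
  have hX : X ∣ 1 - W := X_dvd_iff.mpr (by simp [hW0])
  exact X_pow_dvd_iff.mp (dvd_mul_of_dvd_left (pow_dvd_pow_of_dvd hX r) f) n h

end OneSubW

section SqrtOneSubFourX

variable {K : Type*} [Field K] [CharZero K] {W : K⟦X⟧}

theorem mul_derivative_eq_neg_two_of_sq_eq (hW : W ^ 2 = 1 - 4 * X) : W * d⁄dX K W = -2 := by
  have h := congrArg (d⁄dX K) hW
  rw [derivative_pow, ← map_ofNat C 4, map_sub, Derivation.leibniz, derivative_X,
    derivative_C, derivative_one, map_ofNat, smul_eq_mul, smul_zero] at h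
  refine mul_left_cancel₀ (by simp [← map_ofNat C 2] : (2 : K⟦X⟧) ≠ 0) ?_
  linear_combination h

theorem one_sub_four_X_mul_derivative_inv_of_sq_eq (hW : W ^ 2 = 1 - 4 * X)
    (hW0 : constantCoeff W = 1) : (1 - 4 * X) * d⁄dX K W⁻¹ = 2 * W⁻¹ := by
  have hWW : W * W⁻¹ = 1 := PowerSeries.mul_inv_cancel W (by simp [hW0])
  rw [derivative_inv', ← hW]
  linear_combination (-W * W⁻¹ * d⁄dX K W) * hWW - W⁻¹ * mul_derivative_eq_neg_two_of_sq_eq hW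

theorem coeff_inv_eq_centralBinom_of_sq_eq (hW : W ^ 2 = 1 - 4 * X)
    (hW0 : constantCoeff W = 1) (n : ℕ) : coeff n W⁻¹ = Nat.centralBinom n := by
  rw [coeff_eq_centralBinom_mul_of_derivative (one_sub_four_X_mul_derivative_inv_of_sq_eq hW hW0),
    constantCoeff_inv, hW0, inv_one, mul_one]

theorem coeff_one_sub_pow_mul_inv_of_sq_eq (hW : W ^ 2 = 1 - 4 * X)
    (hW0 : constantCoeff W = 1) (r k : ℕ) :
    coeff (r + k) ((1 - W) ^ r * W⁻¹) = 2 ^ r * ((r + 2 * k).choose k : K) := by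
  induction r using Nat.twoStepInduction generalizing k with
  | zero => simp [coeff_inv_eq_centralBinom_of_sq_eq hW hW0, Nat.centralBinom]
  | one =>
    rw [pow_one, sub_mul, one_mul, map_sub, coeff_inv_eq_centralBinom_of_sq_eq hW hW0,
      PowerSeries.mul_inv_cancel _ (by simp [hW0]), coeff_one, if_neg (by omega),
      Nat.centralBinom, sub_zero, add_comm 1 k, add_comm 1 (2 * k),
      show 2 * (k + 1) = 2 * k + 1 + 1 by ring, Nat.choose_succ_succ', Nat.choose_symm_half]
    push_cast
    ring
  | more r ih₀ ih₁ =>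
    rw [one_sub_pow_add_two_mul_of_sq_eq hW, map_sub, ← map_ofNat C 2, ← map_ofNat C 4,
      coeff_C_mul, coeff_C_mul, show r + 2 + k = r + 1 + (k + 1) by omega, ih₁,
      show r + 1 + (k + 1) = r + (k + 1) + 1 by omega, coeff_succ_X_mul, ih₀,
      show r + 1 + 2 * (k + 1) = r + 2 + 2 * k + 1 by ring, Nat.choose_succ_succ',
      show r + 2 * (k + 1) = r + 2 + 2 * k by ring]
    push_cast
    ring

end SqrtOneSubFourX

end PowerSeries

theorem coeff_dyck_ascent_gf_general (n r : ℕ) (hrn : r ≤ n)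
    (W : PowerSeries ℚ)
    (hW : W ^ 2 = 1 - 4 * PowerSeries.X)
    (hW0 : PowerSeries.constantCoeff W = 1) :
    PowerSeries.coeff n (((1 - W) ^ r * (1 + W)) * (2 ^ (r + 1) * W)⁻¹) =
      (Nat.choose (2 * n - r - 1) (n - 1) : ℚ) := by
  have hsplit : (1 - W) ^ r * (1 + W) * (2 ^ (r + 1) * W)⁻¹
      = C (2 ^ (r + 1))⁻¹ * (C 2 * ((1 - W) ^ r * W⁻¹) - (1 - W) ^ (r + 1) * W⁻¹) := by
    rw [PowerSeries.mul_inv_rev, ← C_inv, map_pow, map_ofNat]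
    ring
  obtain ⟨k, rfl⟩ := Nat.exists_eq_add_of_le hrn
  rw [hsplit, coeff_C_mul, map_sub, coeff_C_mul, coeff_one_sub_pow_mul_inv_of_sq_eq hW hW0]
  cases k with
  | zero =>
    rw [coeff_one_sub_pow_mul_eq_zero hW0 _ (by omega),
      show 2 * (r + 0) - r - 1 = r + 0 - 1 by omega, Nat.choose_self, Nat.choose_zero_right]
    push_cast
    field_simp
    ring
  | succ j =>
    rw [show r + (j + 1) = r + 1 + j by ring, coeff_one_sub_pow_mul_inv_of_sq_eq hW hW0,
      show 2 * (r + 1 + j) - r - 1 = r + 2 * j + 1 by omega, show r + 1 + j - 1 = r + j by omega,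
      Nat.choose_symm_of_eq_add (by ring : r + 2 * j + 1 = r + j + (j + 1)),
      show r + 2 * (j + 1) = r + 2 * j + 1 + 1 by ring, Nat.choose_succ_succ',
      show r + 1 + 2 * j = r + 2 * j + 1 by ring]
    push_cast
    field_simp
    ring

/-- For integers `n ≥ 1` and `r ≥ 1` with `r ≤ n`, in the ring of
formal power series `ℚ⟦Z⟧`, with `W = √(1 - 4Z)` the formal square root with constant
term `1`, one has
`[Z^n] ((1 - W)^r (1 + W))/(2^{r+1} W) = binom(2n - r - 1, n - 1)`
(the division is by the unit `2^{r+1}·W`, taken via the power-series inverse). -/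
theorem coeff_dyck_ascent_gf (n r : ℕ) (hn : 1 ≤ n) (hr : 1 ≤ r) (hrn : r ≤ n)
    (W : PowerSeries ℚ)
    (hW : W ^ 2 = 1 - 4 * PowerSeries.X)
    (hW0 : PowerSeries.constantCoeff W = 1) :
    PowerSeries.coeff n (((1 - W) ^ r * (1 + W)) * (2 ^ (r + 1) * W)⁻¹) =
      (Nat.choose (2 * n - r - 1) (n - 1) : ℚ) :=
  coeff_dyck_ascent_gf_general n r hrn W hW hW0
end

section
/- The number of dispersed Dyck paths of length n (paths with steps -1, +1 away from altitude 0, plus horizontal steps allowed only at altitude 0, starting and ending at altitude 0, never negative) equals binom(n, ⌊n/2⌋). -/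
/-!
Count, more generally, the dispersed paths of length `n` from altitude `0` to altitude `t`.
Removing the last step shows that, for paths ending at `t + 1`, the last step is `+1` from `t` or
`-1` from `t + 2`, and for paths ending at `0` it is `-1` from `1` or a horizontal step from `0`.
These recurrences are Pascal's rule for `n.choose ⌈(n + t) / 2⌉`, and at `t = 0` the symmetry
`n.choose ⌈n / 2⌉ = n.choose ⌊n / 2⌋` gives the theorem.
-/

namespace List

theorem forall_take_iff_forall_prefix {α : Type*} (P : List α → Prop) (l : List α) :
    (∀ k, P (l.take k)) ↔ ∀ p, p <+: l → P p :=
  ⟨fun h _ hp => prefix_iff_eq_take.mp hp ▸ h _, fun h k => h _ (l.take_prefix k)⟩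

theorem forall_take_append_singleton {α : Type*} (P : List α → Prop) (l : List α) (a : α) :
    (∀ k, P ((l ++ [a]).take k)) ↔ (∀ k, P (l.take k)) ∧ P (l ++ [a]) := by
  simp only [forall_take_iff_forall_prefix, prefix_concat_iff, or_imp, forall_and,
    forall_eq, and_comm]

theorem forall_take_get_append_singleton {α : Type*} (P : List α → α → Prop) (l : List α)
    (a : α) :
    (∀ i (h : i < (l ++ [a]).length), P ((l ++ [a]).take i) ((l ++ [a]).get ⟨i, h⟩)) ↔
      (∀ i (h : i < l.length), P (l.take i) (l.get ⟨i, h⟩)) ∧ P l a := by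
  have take_get {i} (hi : i < l.length) :
      P ((l ++ [a]).take i) ((l ++ [a]).get ⟨i, by simp; omega⟩) ↔
        P (l.take i) (l.get ⟨i, hi⟩) := by
    simp [take_append_of_le_length hi.le, getElem_append_left hi]
  constructor
  · intro h
    exact ⟨fun i hi => (take_get hi).mp (h i _), by simpa using h l.length (by simp)⟩
  · rintro ⟨hl, ha⟩ i hi
    obtain hi | rfl : i < l.length ∨ i = l.length := by simp at hi; omega
    · exact (take_get hi).mpr (hl i hi)
    · simpa using ha

theorem append_singleton_mem_image {α : Type*} {S : Set (List α)} {l : List α} {a b : α} :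
    l ++ [b] ∈ (· ++ [a]) '' S ↔ b = a ∧ l ∈ S := by
  simp [eq_comm, and_comm]

theorem encard_union_image_append_singleton {α : Type*} {a b : α} (hab : a ≠ b)
    (S T : Set (List α)) :
    ((· ++ [a]) '' S ∪ (· ++ [b]) '' T).encard = S.encard + T.encard := by
  have hdisj : _root_.Disjoint ((· ++ [a]) '' S) ((· ++ [b]) '' T) :=
    Set.disjoint_left.mpr fun _ ⟨_, _, hl⟩ hl' =>
      hab (append_singleton_mem_image.mp (hl ▸ hl')).1
  rw [Set.encard_union_eq hdisj, (append_left_injective _).encard_image,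
    (append_left_injective _).encard_image]

end List

theorem Nat.choose_div_two_eq_choose_succ_div_two (n : ℕ) :
    n.choose (n / 2) = n.choose ((n + 1) / 2) :=
  Nat.choose_symm_of_eq_add (by omega)

def dispersedPaths (n : ℕ) (s : ℤ) : Set (List ℤ) :=
  {l : List ℤ | l.length = n ∧
      (∀ (i : ℕ) (h : i < l.length),
        l.get ⟨i, h⟩ = 1 ∨ l.get ⟨i, h⟩ = -1 ∨
          (l.get ⟨i, h⟩ = 0 ∧ (l.take i).sum = 0)) ∧
      (∀ k : ℕ, 0 ≤ (l.take k).sum) ∧ l.sum = s}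

namespace dispersedPaths

theorem zero_zero : dispersedPaths 0 0 = {[]} := by
  ext l
  constructor
  · rintro ⟨hl, -⟩
    simpa using hl
  · rintro rfl
    simp [dispersedPaths]

theorem zero_of_ne_zero {s : ℤ} (hs : s ≠ 0) : dispersedPaths 0 s = ∅ :=
  Set.eq_empty_of_forall_notMem fun l ⟨hl, _, _, hsum⟩ => hs (by simp_all)

theorem append_singleton_mem_succ {n : ℕ} {s a : ℤ} {l : List ℤ} :
    l ++ [a] ∈ dispersedPaths (n + 1) s ↔
      l ∈ dispersedPaths n (s - a) ∧ 0 ≤ s ∧ (a = 1 ∨ a = -1 ∨ (a = 0 ∧ s = 0)) := by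
  have hstep := List.forall_take_get_append_singleton
    (fun p x => x = 1 ∨ x = -1 ∨ (x = 0 ∧ p.sum = 0)) l a
  have hprefix := List.forall_take_append_singleton (fun p => 0 ≤ p.sum) l a
  simp only [dispersedPaths, Set.mem_ofPred_eq] at hstep hprefix ⊢
  rw [hstep, hprefix, List.length_append, List.sum_append, List.sum_singleton]
  constructor
  · rintro ⟨hlen, ⟨hsteps, hlast⟩, ⟨hprefixes, hnonneg⟩, rfl⟩
    refine ⟨⟨by simpa using hlen, hsteps, hprefixes, by ring⟩, hnonneg, ?_⟩
    rcases hlast with h | h | ⟨rfl, h⟩ <;> simp_all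
  · rintro ⟨⟨rfl, hsteps, hprefixes, hsum⟩, hs, hlast⟩
    refine ⟨by simp, ⟨hsteps, ?_⟩, ⟨hprefixes, by omega⟩, by omega⟩
    rcases hlast with h | h | ⟨rfl, rfl⟩ <;> simp_all

theorem notMem_of_neg {n : ℕ} {s : ℤ} (hs : s < 0) {l : List ℤ} : l ∉ dispersedPaths n s :=
  fun ⟨_, _, hprefix, hsum⟩ => by
    have := hprefix l.length
    rw [List.take_length, hsum] at this
    omega

theorem nil_notMem_succ {n : ℕ} {s : ℤ} : [] ∉ dispersedPaths (n + 1) s :=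
  fun h => by simpa using h.1

theorem succ_zero (n : ℕ) :
    dispersedPaths (n + 1) 0 =
      (· ++ [-1]) '' dispersedPaths n 1 ∪ (· ++ [0]) '' dispersedPaths n 0 := by
  ext l
  rcases l.eq_nil_or_concat' with rfl | ⟨l, a, rfl⟩
  · simp [nil_notMem_succ]
  simp only [append_singleton_mem_succ, Set.mem_union, List.append_singleton_mem_image]
  constructor
  · rintro ⟨hl, -, rfl | rfl | ⟨rfl, -⟩⟩
    · exact absurd hl (notMem_of_neg (by norm_num))
    · exact .inl ⟨rfl, by simpa using hl⟩
    · exact .inr ⟨rfl, by simpa using hl⟩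
  · rintro (⟨rfl, hl⟩ | ⟨rfl, hl⟩) <;> simpa using hl

theorem succ_natCast_succ (n t : ℕ) :
    dispersedPaths (n + 1) (t + 1) =
      (· ++ [1]) '' dispersedPaths n t ∪ (· ++ [-1]) '' dispersedPaths n (t + 2) := by
  ext l
  rcases l.eq_nil_or_concat' with rfl | ⟨l, a, rfl⟩
  · simp [nil_notMem_succ]
  simp only [append_singleton_mem_succ, Set.mem_union, List.append_singleton_mem_image]
  constructor
  · rintro ⟨hl, -, rfl | rfl | ⟨rfl, h⟩⟩
    · exact .inl ⟨rfl, by simpa using hl⟩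
    · exact .inr ⟨rfl, by simpa [add_assoc] using hl⟩
    · omega
  · rintro (⟨rfl, hl⟩ | ⟨rfl, hl⟩)
    · exact ⟨by simpa using hl, by omega, .inl rfl⟩
    · exact ⟨by simpa [add_assoc] using hl, by omega, .inr (.inl rfl)⟩

/-- `⌈(n + t) / 2⌉` is the symmetric index of `⌊(n - t) / 2⌋`; unlike the latter it gives `0`
for `t > n`, where truncated subtraction would not. -/
theorem encard_eq_choose (n t : ℕ) :
    (dispersedPaths n t).encard = n.choose ((n + t + 1) / 2) := by
  induction n generalizing t with
  | zero =>
    rcases t with _ | t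
    · simp [zero_zero]
    · rw [zero_of_ne_zero (by omega), Nat.choose_eq_zero_of_lt (by omega)]
      simp
  | succ n ih =>
    rcases t with _ | t
    · have h0 : (dispersedPaths n 0).encard = n.choose (n / 2) := by
        rw [← Nat.cast_zero, ih, Nat.choose_div_two_eq_choose_succ_div_two]
      have h1 : (dispersedPaths n 1).encard = n.choose (n / 2 + 1) := by
        rw [← Nat.cast_one, ih]; congr 2; omega
      rw [Nat.cast_zero, succ_zero, List.encard_union_image_append_singleton (by norm_num), h0,
        h1, show (n + 1 + 0 + 1) / 2 = n / 2 + 1 by omega, Nat.choose_succ_succ', Nat.cast_add,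
        add_comm]
    · have h2 : (dispersedPaths n (t + 2)).encard = n.choose ((n + t + 1) / 2 + 1) := by
        rw [show (t : ℤ) + 2 = (t + 2 : ℕ) by push_cast; rfl, ih]; congr 2; omega
      rw [Nat.cast_succ, succ_natCast_succ,
        List.encard_union_image_append_singleton (by norm_num), ih, h2,
        show (n + 1 + (t + 1) + 1) / 2 = (n + t + 1) / 2 + 1 by omega, Nat.choose_succ_succ',
        Nat.cast_add]

end dispersedPaths

/-- The number of dispersed Dyck paths of length `n` — lattice paths
of `n` steps starting and ending at altitude `0`, never going below `0`, with steps
`+1` or `-1`, except that a horizontal step (altitude change `0`) may be taken only at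
altitude `0` — equals `binom(n, ⌊n/2⌋)`. -/
theorem card_dispersed_dyck (n : ℕ) :
    ({l : List ℤ | l.length = n ∧
        (∀ (i : ℕ) (h : i < l.length),
          l.get ⟨i, h⟩ = 1 ∨ l.get ⟨i, h⟩ = -1 ∨
            (l.get ⟨i, h⟩ = 0 ∧ (l.take i).sum = 0)) ∧
        (∀ k : ℕ, 0 ≤ (l.take k).sum) ∧ l.sum = 0}).ncard =
      Nat.choose n (n / 2) := by
  change (dispersedPaths n (0 : ℕ)).ncard = _
  rw [Set.ncard_def, dispersedPaths.encard_eq_choose, ENat.toNat_natCast,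
    Nat.choose_div_two_eq_choose_succ_div_two]
end

section
/- Let S be a Łukasiewicz step set with 0 ∉ S, and let V(z,t) be the bivariate generating function for S-excursions (z marks length, t marks number of r-ascents), so that V(z,t)/z enumerates excursions. Then the bivariate generating function D(z,t) for dispersed S-excursions (excursions where additionally horizontal steps may be taken at altitude 0, not counting towards ascents) satisfies D(z,t) = (1/z)·V(z,t)/(1 - V(z,t)) as formal power series. -/
/-- The number of `r`-ascents of a lattice path given by its list of steps: the number
of maximal runs of exactly `r` consecutive positive (up) steps. (For a step set with
`0 ∉ S`, the up steps of `S` are exactly the positive steps, and horizontal steps of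
dispersed excursions, being `0`, do not count towards ascents.) -/
def numRAscentsPos (r : ℕ) (l : List ℤ) : ℕ :=
  ((l.splitBy (fun a b => decide (0 < a) == decide (0 < b))).filter
    (fun g => g.length == r && g.all (fun x => decide (0 < x)))).length


namespace DispersedAux

variable {α : Type*}

theorem splitBy_loop_cls (cls : α → Bool) (l : List α) (a : α) (g : List α)
    (gs : List (List α)) :
    List.splitBy.loop (fun a b => cls a == cls b) l a g gs =
      gs.reverse ++ (g.reverse ++ a :: l.takeWhile (fun b => cls b == cls a)) ::
        List.splitBy (fun a b => cls a == cls b)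
          (l.dropWhile (fun b => cls b == cls a)) := by
  induction l generalizing a g gs with
  | nil => simp [List.splitBy.loop]
  | cons b t IH =>
    rw [List.splitBy.loop]
    rcases h : cls a == cls b with h' | h'
    · have hb : (cls b == cls a) = false := by
        simp only [beq_eq_false_iff_ne] at h ⊢; exact fun e => h e.symm
      simp only [List.takeWhile_cons, List.dropWhile_cons, hb]
      have : List.splitBy (fun a b => cls a == cls b) (b :: t) =
          List.splitBy.loop (fun a b => cls a == cls b) t b [] [] := rfl
      rw [IH]
      simp [this, IH]
    · have hab : cls a = cls b := by simpa using h
      rw [IH]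
      have hpe : (fun c => cls c == cls b) = (fun c => cls c == cls a) := by
        funext c; rw [hab]
      have hb : (cls b == cls a) = true := by simp [hab]
      simp only [List.takeWhile_cons, List.dropWhile_cons, hb, hpe]
      simp

theorem splitBy_cons_cls (cls : α → Bool) (a : α) (l : List α) :
    List.splitBy (fun a b => cls a == cls b) (a :: l) =
      (a :: l.takeWhile (fun b => cls b == cls a)) ::
        List.splitBy (fun a b => cls a == cls b)
          (l.dropWhile (fun b => cls b == cls a)) := by
  have : List.splitBy (fun a b => cls a == cls b) (a :: l) =
      List.splitBy.loop (fun a b => cls a == cls b) l a [] [] := rfl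
  rw [this, splitBy_loop_cls]; simp

end DispersedAux

namespace DispersedAux

/-- weight of one group in the filter -/
def cnt (r : ℕ) (g : List ℤ) : ℕ :=
  if (g.length == r && g.all (fun x => decide (0 < x))) then 1 else 0

theorem P_cons (r : ℕ) (a : ℤ) (l : List ℤ) :
    numRAscentsPos r (a :: l) =
      cnt r (a :: l.takeWhile (fun b => decide (0 < b) == decide (0 < a))) +
      numRAscentsPos r (l.dropWhile (fun b => decide (0 < b) == decide (0 < a))) := by
  unfold numRAscentsPos
  rw [splitBy_cons_cls (fun x : ℤ => decide (0 < x)) a l]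
  rw [List.filter_cons]
  unfold cnt
  split <;> simp [Nat.add_comm]

theorem cnt_eq_zero_of_mem (r : ℕ) {g : List ℤ} {a : ℤ} (ha : a ∈ g) (h : ¬ 0 < a) :
    cnt r g = 0 := by
  unfold cnt
  rw [if_neg]
  simp only [Bool.and_eq_true, List.all_eq_true, not_and]
  intro _ hall
  exact h (by simpa using hall a ha)

theorem P_nil (r : ℕ) : numRAscentsPos r [] = 0 := rfl

theorem P_zero_cons (r : ℕ) (l : List ℤ) :
    numRAscentsPos r (0 :: l) = numRAscentsPos r l := by
  rw [P_cons]
  rw [cnt_eq_zero_of_mem r (List.mem_cons_self) (by norm_num)]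
  simp only [Nat.zero_add]
  have hq : (fun b : ℤ => decide (0 < b) == decide ((0:ℤ) < 0)) =
      (fun b : ℤ => decide (0 < b) == false) := by norm_num
  rw [hq]
  cases l with
  | nil => rfl
  | cons w t =>
    by_cases hw : (0:ℤ) < w
    · rw [List.dropWhile_cons_of_neg (by simp [hw])]
    · rw [List.dropWhile_cons_of_pos (by simp [hw])]
      rw [P_cons]
      rw [cnt_eq_zero_of_mem r (List.mem_cons_self) hw]
      have : (fun b : ℤ => decide (0 < b) == decide (0 < w)) =
          (fun b : ℤ => decide (0 < b) == false) := by
        funext b; rw [decide_eq_false hw]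
      rw [this, Nat.zero_add]

end DispersedAux

namespace DispersedAux

theorem P_append_zero_aux (r : ℕ) :
    ∀ (n : ℕ) (l1 : List ℤ), l1.length ≤ n → ∀ l2 : List ℤ,
      numRAscentsPos r (l1 ++ 0 :: l2) =
        numRAscentsPos r l1 + numRAscentsPos r (0 :: l2) := by
  intro n
  induction n with
  | zero =>
    intro l1 h l2
    rw [List.length_eq_zero_iff.mp (Nat.le_zero.mp h)]
    simp [P_nil]
  | succ n IH =>
    intro l1 h l2
    cases l1 with
    | nil => simp [P_nil]
    | cons a t =>
      set p : ℤ → Bool := fun b => decide (0 < b) == decide (0 < a) with hp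
      rw [List.cons_append, P_cons]
      by_cases hall : ∀ x ∈ t, p x
      · have htw : t.takeWhile p = t := List.takeWhile_eq_self_iff.mpr hall
        have hdw : t.dropWhile p = [] := List.dropWhile_eq_nil_iff.mpr hall
        have hPat : numRAscentsPos r (a :: t) = cnt r (a :: t) := by
          rw [P_cons, htw, hdw, P_nil, Nat.add_zero]
        rw [List.takeWhile_append_of_pos hall, List.dropWhile_append_of_pos hall, hPat]
        by_cases ha : (0:ℤ) < a
        · have hp0 : ¬ (p 0 = true) := by simp [hp, ha]
          rw [List.takeWhile_cons_of_neg hp0, List.dropWhile_cons_of_neg hp0,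
            List.append_nil]
        · have hp0 : p 0 = true := by simp [hp, ha]
          rw [List.takeWhile_cons_of_pos hp0, List.dropWhile_cons_of_pos hp0]
          rw [cnt_eq_zero_of_mem r (List.mem_cons_self) ha,
            cnt_eq_zero_of_mem r (List.mem_cons_self) ha]
          have h0l2 : numRAscentsPos r ((0:ℤ) :: l2) =
              numRAscentsPos r (l2.dropWhile p) := by
            rw [P_cons, cnt_eq_zero_of_mem r (List.mem_cons_self) (by norm_num)]
            have hq : (fun b : ℤ => decide (0 < b) == decide ((0:ℤ) < 0)) = p := by
              funext b; simp [hp, ha]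
            rw [hq, Nat.zero_add]
          rw [h0l2]
      · rw [List.takeWhile_append, List.dropWhile_append]
        rw [if_neg, if_neg]
        · have hlen : (t.dropWhile p).length ≤ n := by
            have h1 := (List.dropWhile_sublist (l := t) p).length_le
            have h2 : t.length ≤ n := by simpa using Nat.succ_le_succ_iff.mp h
            omega
          rw [IH _ hlen l2, P_cons r a t, ← hp]
          omega
        · intro hc
          rw [List.isEmpty_iff] at hc
          exact hall (List.dropWhile_eq_nil_iff.mp hc)
        · intro hc
          have : t.takeWhile p = t :=
            (List.takeWhile_prefix p).eq_of_length hc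
          exact hall fun x hx => List.mem_takeWhile_imp (this ▸ hx)

theorem P_append_zero (r : ℕ) (e d : List ℤ) :
    numRAscentsPos r (e ++ 0 :: d) = numRAscentsPos r e + numRAscentsPos r d := by
  rw [P_append_zero_aux r e.length e le_rfl d, P_zero_cons]

end DispersedAux

namespace DispersedAux

theorem finite_length_mem (T : Finset ℤ) :
    ∀ n : ℕ, {l : List ℤ | l.length = n ∧ ∀ s ∈ l, s ∈ T}.Finite := by
  intro n
  induction n with
  | zero =>
    apply Set.Finite.subset (Set.finite_singleton ([] : List ℤ))
    rintro l ⟨hl, -⟩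
    simp [List.length_eq_zero_iff.mp hl]
  | succ n IH =>
    have : {l : List ℤ | l.length = n + 1 ∧ ∀ s ∈ l, s ∈ T} ⊆
        (fun p : ℤ × List ℤ => p.1 :: p.2) ''
          ((T : Set ℤ) ×ˢ {l : List ℤ | l.length = n ∧ ∀ s ∈ l, s ∈ T}) := by
      rintro l ⟨hl, hmem⟩
      cases l with
      | nil => simp at hl
      | cons a t =>
        refine ⟨(a, t), ⟨hmem a (List.mem_cons_self), by simpa using hl,
          fun s hs => hmem s (List.mem_cons_of_mem _ hs)⟩, rfl⟩
    exact Set.Finite.subset (Set.Finite.image _ ((T.finite_toSet).prod IH)) this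

end DispersedAux

namespace DispersedAux

def ExcSet (S : Finset ℤ) (n : ℕ) : Set (List ℤ) :=
  {l : List ℤ | l.length = n ∧ (∀ s ∈ l, s ∈ S) ∧
    (∀ k : ℕ, 0 ≤ (l.take k).sum) ∧ l.sum = 0}

def DispSet (S : Finset ℤ) (n : ℕ) : Set (List ℤ) :=
  {l : List ℤ | l.length = n ∧
    (∀ (i : ℕ) (h : i < l.length),
      l.get ⟨i, h⟩ ∈ S ∨ (l.get ⟨i, h⟩ = 0 ∧ (l.take i).sum = 0)) ∧
    (∀ k : ℕ, 0 ≤ (l.take k).sum) ∧ l.sum = 0}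

theorem excSet_finite (S : Finset ℤ) (n : ℕ) : (ExcSet S n).Finite := by
  apply (finite_length_mem S n).subset
  rintro l ⟨h1, h2, -⟩
  exact ⟨h1, h2⟩

theorem dispSet_finite (S : Finset ℤ) (n : ℕ) : (DispSet S n).Finite := by
  apply (finite_length_mem (insert 0 S) n).subset
  rintro l ⟨h1, h2, -⟩
  refine ⟨h1, fun s hs => ?_⟩
  obtain ⟨i, hi, rfl⟩ := List.mem_iff_getElem.mp hs
  rcases h2 i hi with h | h
  · exact Finset.mem_insert_of_mem (by simpa using h)
  · simp only [List.get_eq_getElem] at h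
    rw [h.1]
    exact Finset.mem_insert_self _ _

theorem take_glue_sum (e d : List ℤ) (he : e.sum = 0) (j : ℕ) :
    ((e ++ 0 :: d).take (e.length + 1 + j)).sum = (d.take j).sum := by
  rw [List.take_append, List.take_of_length_le (by omega),
    List.sum_append, he]
  have : e.length + 1 + j - e.length = j + 1 := by omega
  rw [this, List.take_succ_cons, List.sum_cons]
  ring

theorem take_glue_small (e : List ℤ) (x : ℤ) (d : List ℤ) {k : ℕ} (hk : k ≤ e.length) :
    (e ++ x :: d).take k = e.take k := by
  rw [List.take_append, Nat.sub_eq_zero_of_le hk, List.take_zero,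
    List.append_nil]

/-- forward direction: gluing an excursion, a zero step and a dispersed excursion. -/
theorem glue_mem_disp {S : Finset ℤ} {e d : List ℤ} {c m : ℕ}
    (he : e ∈ ExcSet S c) (hd : d ∈ DispSet S m) :
    (e ++ 0 :: d) ∈ DispSet S (c + 1 + m) := by
  obtain ⟨hel, hes, hep, hesum⟩ := he
  obtain ⟨hdl, hds, hdp, hdsum⟩ := hd
  subst hel hdl
  refine ⟨by simp; omega, ?_, ?_, ?_⟩
  · intro i h
    simp only [List.get_eq_getElem]
    rcases lt_trichotomy i e.length with hi | hi | hi
    · rw [List.getElem_append_left hi]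
      exact Or.inl (hes _ (List.getElem_mem hi))
    · subst hi
      right
      constructor
      · rw [List.getElem_append_right (le_refl _)]
        simp
      · rw [take_glue_small e 0 d (le_refl _), List.take_of_length_le (le_refl _), hesum]
    · have hi' : e.length ≤ i := le_of_lt hi
      rw [List.getElem_append_right hi']
      have hilen : i < e.length + 1 + d.length := by
        simp only [List.length_append, List.length_cons] at h; omega
      set j := i - e.length - 1 with hj
      have h2 : i - e.length = j + 1 := by omega
      simp only [h2, List.getElem_cons_succ]
      have hjd : j < d.length := by omega
      rcases hds j hjd with h' | h'
      · simp only [List.get_eq_getElem] at h'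
        exact Or.inl h'
      · simp only [List.get_eq_getElem] at h'
        refine Or.inr ⟨h'.1, ?_⟩
        have hieq : i = e.length + 1 + j := by omega
        rw [hieq, take_glue_sum e d hesum j, h'.2]
  · intro k
    rcases le_or_gt k e.length with hk | hk
    · rw [take_glue_small e 0 d hk]; exact hep k
    · have : k = e.length + 1 + (k - e.length - 1) := by omega
      rw [this, take_glue_sum e d hesum]
      exact hdp _
  · rw [List.sum_append, List.sum_cons, hesum, hdsum]; ring

end DispersedAux

namespace DispersedAux

theorem exc_iff_disp_no_zero {S : Finset ℤ} (h0 : (0:ℤ) ∉ S) {n : ℕ} {l : List ℤ} :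
    l ∈ ExcSet S n ↔ l ∈ DispSet S n ∧ (0:ℤ) ∉ l := by
  constructor
  · rintro ⟨h1, h2, h3, h4⟩
    refine ⟨⟨h1, ?_, h3, h4⟩, ?_⟩
    · intro i h
      exact Or.inl (h2 _ (l.get_mem _))
    · intro hc
      exact h0 (h2 _ hc)
  · rintro ⟨⟨h1, h2, h3, h4⟩, hz⟩
    refine ⟨h1, ?_, h3, h4⟩
    intro s hs
    obtain ⟨i, hi, rfl⟩ := List.mem_iff_getElem.mp hs
    rcases h2 i hi with h | h
    · simpa using h
    · simp only [List.get_eq_getElem] at h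
      rw [h.1] at hs ⊢
      exact absurd hs hz

/-- reverse direction: splitting a dispersed excursion containing a zero step. -/
theorem getElem_glue0 (e : List ℤ) (x : ℤ) (d : List ℤ)
    (H : e.length < (e ++ x :: d).length) :
    (e ++ x :: d)[e.length]'H = x := by
  have h1 : (e ++ x :: d)[e.length]? = some ((e ++ x :: d)[e.length]'H) :=
    List.getElem?_eq_getElem H
  rw [List.getElem?_append_right (le_refl _), Nat.sub_self,
    List.getElem?_cons_zero] at h1
  exact (Option.some_injective _ h1).symm

theorem getElem_glue (e : List ℤ) (x : ℤ) (d : List ℤ) {j : ℕ} (hj : j < d.length)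
    (H : e.length + 1 + j < (e ++ x :: d).length) :
    (e ++ x :: d)[e.length + 1 + j]'H = d[j] := by
  have h1 : (e ++ x :: d)[e.length + 1 + j]? =
      some ((e ++ x :: d)[e.length + 1 + j]'H) := List.getElem?_eq_getElem H
  rw [List.getElem?_append_right (by omega),
    (by omega : e.length + 1 + j - e.length = j + 1),
    List.getElem?_cons_succ, List.getElem?_eq_getElem hj] at h1
  exact (Option.some_injective _ h1).symm

theorem disp_split {S : Finset ℤ} (h0 : (0:ℤ) ∉ S) {m : ℕ} {e d : List ℤ}
    (hze : (0:ℤ) ∉ e)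
    (hl : (e ++ 0 :: d) ∈ DispSet S m) :
    e ∈ ExcSet S e.length ∧ d ∈ DispSet S d.length ∧ m = e.length + 1 + d.length := by
  obtain ⟨h1, h2, h3, h4⟩ := hl
  have hm : m = e.length + 1 + d.length := by
    simp only [List.length_append, List.length_cons] at h1; omega
  have hesum : e.sum = 0 := by
    have hc : e.length < (e ++ 0 :: d).length := by
      simp only [List.length_append, List.length_cons]; omega
    rcases h2 e.length hc with h | h
    · exfalso
      apply h0
      simp only [List.get_eq_getElem, getElem_glue0 e 0 d hc] at h
      exact h
    · have := h.2
      rwa [take_glue_small e 0 d (le_refl _), List.take_of_length_le (le_refl _)] at this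
  refine ⟨⟨rfl, ?_, ?_, hesum⟩, ⟨rfl, ?_, ?_, ?_⟩, hm⟩
  · -- entries of e in S
    intro s hs
    obtain ⟨i, hi, rfl⟩ := List.mem_iff_getElem.mp hs
    have hc : i < (e ++ 0 :: d).length := by simp; omega
    rcases h2 i hc with h | h
    · simpa [List.get_eq_getElem, List.getElem_append_left hi] using h
    · exfalso
      simp only [List.get_eq_getElem, List.getElem_append_left hi] at h
      exact hze (h.1 ▸ List.getElem_mem hi)
  · -- prefix sums of e
    intro k
    rcases le_or_gt k e.length with hk | hk
    · have := h3 k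
      rwa [take_glue_small e 0 d hk] at this
    · rw [List.take_of_length_le (by omega), hesum]
  · -- disp condition for d
    intro j hj
    have hc : e.length + 1 + j < (e ++ 0 :: d).length := by
      simp only [List.length_append, List.length_cons]; omega
    rcases h2 (e.length + 1 + j) hc with h | h
    · left
      simp only [List.get_eq_getElem, getElem_glue e 0 d hj hc] at h ⊢
      exact h
    · right
      simp only [List.get_eq_getElem, getElem_glue e 0 d hj hc] at h ⊢
      obtain ⟨hz, hsum⟩ := h
      refine ⟨hz, ?_⟩
      rwa [take_glue_sum e d hesum j] at hsum
  · -- prefix sums of d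
    intro k
    have := h3 (e.length + 1 + k)
    rwa [take_glue_sum e d hesum k] at this
  · -- sum of d
    rw [List.sum_append, List.sum_cons, hesum] at h4
    linarith

theorem split_eq (e : List ℤ) (hze : (0:ℤ) ∉ e) (d : List ℤ) :
    (e ++ 0 :: d).takeWhile (fun x => decide (x ≠ 0)) = e ∧
    ((e ++ 0 :: d).dropWhile (fun x => decide (x ≠ 0))).tail = d := by
  have hall : ∀ x ∈ e, (fun x : ℤ => decide (x ≠ 0)) x := by
    intro x hx
    simp only [decide_eq_true_eq]
    rintro rfl; exact hze hx
  constructor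
  · rw [List.takeWhile_append_of_pos hall, List.takeWhile_cons_of_neg (by simp)]
    simp
  · rw [List.dropWhile_append_of_pos hall, List.dropWhile_cons_of_neg (by simp)]
    simp

theorem eq_split (l : List ℤ) (hz : (0:ℤ) ∈ l) :
    l = l.takeWhile (fun x => decide (x ≠ 0)) ++
      0 :: (l.dropWhile (fun x => decide (x ≠ 0))).tail ∧
    (0:ℤ) ∉ l.takeWhile (fun x => decide (x ≠ 0)) := by
  set p : ℤ → Bool := fun x => decide (x ≠ 0) with hp
  have hne : l.dropWhile p ≠ [] := by
    intro hc
    have := List.dropWhile_eq_nil_iff.mp hc 0 hz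
    simp [hp] at this
  have hhead : (l.dropWhile p).head hne = 0 := by
    have := List.head_dropWhile_not p hne
    simpa [hp] using this
  constructor
  · have hd : l.dropWhile p = 0 :: (l.dropWhile p).tail := by
      rw [← hhead]
      exact (List.cons_head_tail hne).symm
    conv_lhs => rw [← List.takeWhile_append_dropWhile (p := p) (l := l), hd]
  · intro hc
    have := List.mem_takeWhile_imp hc
    simp [hp] at this

end DispersedAux

namespace DispersedAux

noncomputable def AA (S : Finset ℤ) (r n : ℕ) : Polynomial ℚ :=
  ∑ᶠ l ∈ ExcSet S n, (Polynomial.X : Polynomial ℚ) ^ numRAscentsPos r l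

noncomputable def BB (S : Finset ℤ) (r n : ℕ) : Polynomial ℚ :=
  ∑ᶠ l ∈ DispSet S n, (Polynomial.X : Polynomial ℚ) ^ numRAscentsPos r l

theorem key (S : Finset ℤ) (h0 : (0:ℤ) ∉ S) (r m : ℕ) :
    BB S r m = AA S r m + ∑ i ∈ Finset.range m, AA S r i * BB S r (m - (i+1)) := by
  classical
  set f : List ℤ → Polynomial ℚ :=
    fun l => (Polynomial.X : Polynomial ℚ) ^ numRAscentsPos r l with hf
  have hBB : ∀ n, BB S r n = ∑ l ∈ (dispSet_finite S n).toFinset, f l := by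
    intro n
    exact finsum_mem_eq_finite_toFinset_sum f (dispSet_finite S n)
  have hAA : ∀ n, AA S r n = ∑ l ∈ (excSet_finite S n).toFinset, f l := by
    intro n
    exact finsum_mem_eq_finite_toFinset_sum f (excSet_finite S n)
  have hA : ∑ l ∈ ((dispSet_finite S m).toFinset.filter (fun l => (0:ℤ) ∉ l)), f l
      = AA S r m := by
    rw [hAA]
    apply Finset.sum_congr _ (fun _ _ => rfl)
    ext l
    simp only [Finset.mem_filter, Set.Finite.mem_toFinset]
    exact (exc_iff_disp_no_zero h0).symm
  have hB : ∑ l ∈ ((dispSet_finite S m).toFinset.filter (fun l => (0:ℤ) ∈ l)), f l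
      = ∑ i ∈ Finset.range m, AA S r i * BB S r (m - (i+1)) := by
    have hrhs : ∀ i, AA S r i * BB S r (m - (i+1)) =
        ∑ q ∈ (excSet_finite S i).toFinset ×ˢ (dispSet_finite S (m - (i+1))).toFinset,
          f q.1 * f q.2 := by
      intro i
      rw [hAA, hBB, Finset.sum_mul_sum]
      rw [Finset.sum_product]
    calc ∑ l ∈ ((dispSet_finite S m).toFinset.filter (fun l => (0:ℤ) ∈ l)), f l
        = ∑ q ∈ (Finset.range m).sigma
            (fun i => (excSet_finite S i).toFinset ×ˢ
              (dispSet_finite S (m - (i+1))).toFinset),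
            f q.2.1 * f q.2.2 := by
          apply Finset.sum_nbij'
            (i := fun l => (⟨(l.takeWhile (fun x => decide (x ≠ 0))).length,
              (l.takeWhile (fun x => decide (x ≠ 0)),
               (l.dropWhile (fun x => decide (x ≠ 0))).tail)⟩ :
               Σ _ : ℕ, List ℤ × List ℤ))
            (j := fun q => q.2.1 ++ 0 :: q.2.2)
          · -- hi : maps into sigma set
            intro l hl
            simp only [Finset.mem_filter, Set.Finite.mem_toFinset] at hl
            obtain ⟨hld, hlz⟩ := hl
            obtain ⟨hsplit, hze⟩ := eq_split l hlz
            have := disp_split h0 hze (by rw [← hsplit]; exact hld)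
            obtain ⟨hee, hdd, hmm⟩ := this
            simp only [Finset.mem_sigma, Finset.mem_product, Finset.mem_range,
              Set.Finite.mem_toFinset]
            refine ⟨by omega, hee, ?_⟩
            have : (l.dropWhile (fun x => decide (x ≠ 0))).tail.length =
                m - ((l.takeWhile (fun x => decide (x ≠ 0))).length + 1) := by omega
            rw [this] at hdd
            exact hdd
          · -- hj : glue maps into filter set
            rintro ⟨c, e, d⟩ hq
            simp only [Finset.mem_sigma, Finset.mem_product, Finset.mem_range,
              Set.Finite.mem_toFinset] at hq
            obtain ⟨hc, he, hd⟩ := hq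
            simp only [Finset.mem_filter, Set.Finite.mem_toFinset]
            have hlen : c + 1 + (m - (c+1)) = m := by omega
            constructor
            · have hg := glue_mem_disp he hd
              rwa [hlen] at hg
            · exact List.mem_append_right e (List.mem_cons_self)
          · -- left inverse (on lists)
            intro l hl
            simp only [Finset.mem_filter, Set.Finite.mem_toFinset] at hl
            exact ((eq_split l hl.2).1).symm
          · -- right inverse (on sigma)
            rintro ⟨c, e, d⟩ hq
            simp only [Finset.mem_sigma, Finset.mem_product, Finset.mem_range,
              Set.Finite.mem_toFinset] at hq
            obtain ⟨hc, he, hd⟩ := hq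
            have hze : (0:ℤ) ∉ e := fun hin => h0 (he.2.1 0 hin)
            obtain ⟨h1, h2⟩ := split_eq e hze d
            simp only [h1, h2]
            have : e.length = c := he.1
            simp [this]
          · -- values
            intro l hl
            simp only [Finset.mem_filter, Set.Finite.mem_toFinset] at hl
            obtain ⟨hsplit, hze⟩ := eq_split l hl.2
            conv_lhs => rw [hsplit]
            show (Polynomial.X : Polynomial ℚ) ^ numRAscentsPos r _ =
              (Polynomial.X : Polynomial ℚ) ^ numRAscentsPos r _ *
              (Polynomial.X : Polynomial ℚ) ^ numRAscentsPos r _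
            rw [P_append_zero, pow_add]
      _ = ∑ i ∈ Finset.range m, AA S r i * BB S r (m - (i+1)) := by
          rw [Finset.sum_sigma]
          exact Finset.sum_congr rfl (fun i _ => (hrhs i).symm)
  rw [hBB, ← Finset.sum_filter_add_sum_filter_not ((dispSet_finite S m).toFinset)
    (fun l => (0:ℤ) ∈ l) f, hB]
  rw [hA]
  ring

end DispersedAux


/-- Let `S` be a Łukasiewicz step set with `0 ∉ S` and let `V(z,t)`
be the bivariate generating function of `S`-excursions (`z` marks length, `t` marks the
number of `r`-ascents), so `V(z,t)/z` enumerates excursions. Let `D(z,t)` be the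
bivariate generating function of dispersed `S`-excursions (excursions where horizontal
steps may additionally be taken at altitude `0`, not counting towards ascents). Then
`D(z,t) = (1/z)·V(z,t)/(1 - V(z,t))`, i.e. `z·(1 - V)·D = V`, as formal power series
in `z` over `ℚ[t]`. -/
theorem dispersed_gf_eq
    (S : Finset ℤ) (hneg : (-1 : ℤ) ∈ S)
    (hpos : ∀ s ∈ S, s ≠ -1 → 0 < s)
    (r : ℕ) (hr : 1 ≤ r)
    (V D : PowerSeries (Polynomial ℚ))
    (hV0 : PowerSeries.coeff (R := Polynomial ℚ) 0 V = 0)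
    (hV : ∀ n : ℕ,
      PowerSeries.coeff (R := Polynomial ℚ) (n + 1) V =
        ∑ᶠ l ∈ {l : List ℤ | l.length = n ∧ (∀ s ∈ l, s ∈ S) ∧
            (∀ k : ℕ, 0 ≤ (l.take k).sum) ∧ l.sum = 0},
          (Polynomial.X : Polynomial ℚ) ^ numRAscentsPos r l)
    (hD : ∀ n : ℕ,
      PowerSeries.coeff (R := Polynomial ℚ) n D =
        ∑ᶠ l ∈ {l : List ℤ | l.length = n ∧
            (∀ (i : ℕ) (h : i < l.length),
              l.get ⟨i, h⟩ ∈ S ∨ (l.get ⟨i, h⟩ = 0 ∧ (l.take i).sum = 0)) ∧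
            (∀ k : ℕ, 0 ≤ (l.take k).sum) ∧ l.sum = 0},
          (Polynomial.X : Polynomial ℚ) ^ numRAscentsPos r l) :
    PowerSeries.X * (1 - V) * D = V := by
  classical
  have h0 : (0:ℤ) ∉ S := by
    intro h
    have := hpos 0 h (by norm_num)
    omega
  have hVA : ∀ n : ℕ, PowerSeries.coeff (R := Polynomial ℚ) (n + 1) V =
      DispersedAux.AA S r n := fun n => hV n
  have hDB : ∀ n : ℕ, PowerSeries.coeff (R := Polynomial ℚ) n D =
      DispersedAux.BB S r n := fun n => hD n
  ext n
  cases n with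
  | zero =>
    rw [mul_assoc, PowerSeries.coeff_zero_X_mul, hV0]
  | succ n =>
    rw [mul_assoc, PowerSeries.coeff_succ_X_mul, sub_mul, one_mul, map_sub,
      PowerSeries.coeff_mul, Finset.Nat.sum_antidiagonal_eq_sum_range_succ_mk,
      Finset.sum_range_succ']
    simp only [hV0, zero_mul, add_zero, Nat.zero_sub]
    rw [hVA n, hDB n]
    have hc : ∀ i ∈ Finset.range n,
        PowerSeries.coeff (R := Polynomial ℚ) (i+1) V *
          PowerSeries.coeff (R := Polynomial ℚ) (n - (i+1)) D =
        DispersedAux.AA S r i * DispersedAux.BB S r (n - (i+1)) := by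
      intro i _
      rw [hVA i, hDB (n - (i+1))]
    rw [Finset.sum_congr rfl hc, DispersedAux.key S h0 r n, add_sub_cancel_right]
end
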